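/- arXiv:2202.08330 — 3 statements merged into one kernel-verified Lean document; each statement's English description precedes it below -/
import Mathlib

section
/- Let G be a simplicial complex of dimension k ≥ 1 and let m_0, m_1, ..., m_k be positive integers with s_i(G) ≤ m_i for i = 0, 1, ..., k. Then for every simplicial complex F of dimension at most k with s_i(F) ≤ m_i for i = 0,1,...,k, the number of ordered copies of G in F satisfies n_o(F,G) ≤ s_0(G)^{s_0(G)} · exp(γ(m_0,m_1,...,m_k;G)). -/
open scoped BigOperators

/-- A finite abstract simplicial complex: a nonempty family of nonempty finite subsets of `ℕ`
(the simplices), closed under taking nonempty subsets. -/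
structure SComplex where
  faces : Finset (Finset ℕ)
  faces_nonempty : faces.Nonempty
  empty_not_mem : ∅ ∉ faces
  down_closed : ∀ s ∈ faces, ∀ t : Finset ℕ, t ⊆ s → t ≠ ∅ → t ∈ faces

namespace SComplex

/-- The vertex set of a simplicial complex. -/
def verts (F : SComplex) : Finset ℕ := F.faces.sup id

/-- The finset of `i`-simplices (simplices with `i+1` vertices). -/
def simplices (F : SComplex) (i : ℕ) : Finset (Finset ℕ) :=
  F.faces.filter fun s => s.card = i + 1

/-- `s i F` is the number of `i`-simplices of `F`. -/
def s (F : SComplex) (i : ℕ) : ℕ := (F.simplices i).card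

/-- The dimension of a simplicial complex: the largest `i` with an `i`-simplex. -/
def dim (F : SComplex) : ℕ := F.faces.sup Finset.card - 1

/-- `H` is a subcomplex of `F`. -/
def IsSubcomplex (H F : SComplex) : Prop := H.faces ⊆ F.faces

/-- An ordered copy of `G` in `F`: an injective map on the vertices of `G` (normalized to `0`
off the vertex set of `G`) mapping the vertex set of every simplex of `G` onto the vertex set
of a simplex of `F` (necessarily of the same dimension). -/
def IsOrderedCopy (F G : SComplex) (φ : ℕ → ℕ) : Prop :=
  Set.InjOn φ ↑G.verts ∧ (∀ v ∉ G.verts, φ v = 0) ∧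
    ∀ t ∈ G.faces, t.image φ ∈ F.faces

/-- `nOrdered F G` is the number of ordered copies of `G` in `F`. -/
noncomputable def nOrdered (F G : SComplex) : ℕ :=
  Set.ncard {φ : ℕ → ℕ | IsOrderedCopy F G φ}

/-- `F` is isomorphic to `G`. -/
def Iso (F G : SComplex) : Prop :=
  ∃ φ : ℕ → ℕ, Set.InjOn φ ↑G.verts ∧ F.faces = G.faces.image (Finset.image φ)

/-- `nCopies F G` is the number of unordered copies of `G` in `F`, i.e. the number of
subcomplexes of `F` isomorphic to `G`. -/
noncomputable def nCopies (F G : SComplex) : ℕ :=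
  Set.ncard {H : SComplex | H.IsSubcomplex F ∧ H.Iso G}

/-- `Nmax m k G` is the maximum of `nCopies F G` over all simplicial complexes `F` with
`s i F ≤ m i` for every `i ≤ k` (the extremal parameter `N(m₀,…,m_k;G)`). -/
noncomputable def Nmax (m : ℕ → ℕ) (k : ℕ) (G : SComplex) : ℕ :=
  sSup {t : ℕ | ∃ F : SComplex, (∀ i ≤ k, F.s i ≤ m i) ∧ t = nCopies F G}

/-- `gammaLP m k G` is the optimal value of the linear program: maximize `∑_{v ∈ G₀} x v`
subject to `0 ≤ ∑_{v ∈ σ} x v ≤ log (m i)` for every `i`-simplex `σ` of `G`, `i ≤ k`. -/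
noncomputable def gammaLP (m : ℕ → ℕ) (k : ℕ) (G : SComplex) : ℝ :=
  sSup {t : ℝ | ∃ x : ℕ → ℝ,
    (∀ i ≤ k, ∀ σ ∈ G.simplices i,
        0 ≤ ∑ v ∈ σ, x v ∧ ∑ v ∈ σ, x v ≤ Real.log (m i)) ∧
    t = ∑ v ∈ G.verts, x v}

/-- The potential `i`-simplices on vertex set `{1,…,n}` given the complex `K`: the `(i+1)`-sets
all of whose `i`-element subsets (the `(i-1)`-dimensional boundary faces) belong to `K`. -/
def potentialSimplices (n i : ℕ) (K : SComplex) : Finset (Finset ℕ) :=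
  ((Finset.Icc 1 n).powersetCard (i + 1)).filter
    fun σ => ∀ t ∈ σ.powersetCard i, t ∈ K.faces

/-- The probability that the multi-parameter random simplicial complex `K(n; p₁,…,p_k)` on
vertex set `{1,…,n}` equals the complex `K`. -/
noncomputable def complexProb (n k : ℕ) (p : ℕ → ℝ) (K : SComplex) : ℝ :=
  if K.verts = Finset.Icc 1 n ∧ ∀ t ∈ K.faces, t.card ≤ k + 1 then
    ∏ i ∈ Finset.Icc 1 k,
      p i ^ K.s i * (1 - p i) ^ ((potentialSimplices n i K).card - K.s i)
  else 0

/-- The probability of an event `A` under the multi-parameter random simplicial complex. -/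
noncomputable def pr (n k : ℕ) (p : ℕ → ℝ) (A : Set SComplex) : ℝ :=
  ∑' K : SComplex, A.indicator (complexProb n k p) K

/-- The expectation of `f` under the multi-parameter random simplicial complex. -/
noncomputable def expec (n k : ℕ) (p : ℕ → ℝ) (f : SComplex → ℝ) : ℝ :=
  ∑' K : SComplex, complexProb n k p K * f K

/-- `μ_{o,n}(G) = (n)_{s₀(G)} ∏_{i=1}^k p_i^{s_i(G)}`. -/
noncomputable def muo (n k : ℕ) (p : ℕ → ℝ) (G : SComplex) : ℝ :=
  (n.descFactorial (G.s 0) : ℝ) * ∏ i ∈ Finset.Icc 1 k, p i ^ G.s i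

/-- `Ψ_{G,n} = n^{s₀(G)} ∏_{i=1}^k p_i^{s_i(G)}`. -/
noncomputable def Psi (n k : ℕ) (p : ℕ → ℝ) (G : SComplex) : ℝ :=
  (n : ℝ) ^ G.s 0 * ∏ i ∈ Finset.Icc 1 k, p i ^ G.s i

/-- `M*_{G,n}(p₁,…,p_k)`: the largest integer `m` with `1 ≤ m ≤ C(n,k+1)/s_k(G)` such that
`N(n, m·s₁(G), …, m·s_k(G); H) ≤ Ψ_{H,n}` for every (non-empty) subcomplex `H` of `G`. -/
noncomputable def Mstar (n k : ℕ) (p : ℕ → ℝ) (G : SComplex) : ℕ :=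
  sSup {m : ℕ | 1 ≤ m ∧ m * G.s k ≤ n.choose (k + 1) ∧
    ∀ H : SComplex, H.IsSubcomplex G →
      (Nmax (fun i => if i = 0 then n else m * G.s i) k H : ℝ) ≤ Psi n k p H}

/-- `σ_k`: the complete simplicial complex of dimension `k` on the `k+1` vertices `{1,…,k+1}`. -/
def simplexComplex (k : ℕ) : SComplex where
  faces := (Finset.Icc 1 (k + 1)).powerset.filter fun s => s ≠ ∅
  faces_nonempty := ⟨{1}, by
    simp only [Finset.mem_filter, Finset.mem_powerset, Finset.singleton_subset_iff,
      Finset.mem_Icc]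
    exact ⟨⟨le_refl 1, Nat.le_add_left 1 k⟩, by simp⟩⟩
  empty_not_mem := by simp
  down_closed := by
    intro s hs t hts htne
    simp only [Finset.mem_filter, Finset.mem_powerset] at hs ⊢
    exact ⟨hts.trans hs.1, htne⟩

/-- The `q`-skeleton of a simplicial complex: all simplices of dimension at most `q`. -/
def skeleton (F : SComplex) (q : ℕ) : SComplex where
  faces := F.faces.filter fun s => s.card ≤ q + 1
  faces_nonempty := by
    obtain ⟨t, ht⟩ := F.faces_nonempty
    have htne : t ≠ ∅ := fun h => F.empty_not_mem (h ▸ ht)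
    obtain ⟨v, hv⟩ := Finset.nonempty_iff_ne_empty.2 htne
    refine ⟨{v}, ?_⟩
    simp only [Finset.mem_filter]
    exact ⟨F.down_closed t ht {v} (Finset.singleton_subset_iff.2 hv) (by simp),
      by simp⟩
  empty_not_mem := fun h => F.empty_not_mem (Finset.mem_filter.1 h).1
  down_closed := by
    intro t ht u hut hune
    rw [Finset.mem_filter] at ht ⊢
    exact ⟨F.down_closed t ht.1 u hut hune, le_trans (Finset.card_le_card hut) ht.2⟩

open Classical in
/-- The simplicial boundary matrix `∂_j : C_j → C_{j-1}` over `ℚ`, with the usual signs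
determined by the ordering of the vertices. -/
noncomputable def boundaryMatrix (K : SComplex) (j : ℕ) :
    Matrix ↥(K.simplices (j - 1)) ↥(K.simplices j) ℚ :=
  fun τ σ =>
    if τ.1 ⊆ σ.1 then
      (-1 : ℚ) ^ ((σ.1.filter fun w : ℕ => (w : WithBot ℕ) < (σ.1 \ τ.1).min).card)
    else 0

/-- The `j`-th Betti number of `K` (over `ℚ`):
`β_j = dim ker ∂_j - rank ∂_{j+1} = s_j(K) - rank ∂_j - rank ∂_{j+1}`. -/
noncomputable def betti (K : SComplex) (j : ℕ) : ℕ :=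
  K.s j - (K.boundaryMatrix j).rank - (K.boundaryMatrix (j + 1)).rank

/-- The number of free `j`-simplices of `K`: `j`-simplices not contained in any strictly
larger simplex of `K`. -/
def freeCount (K : SComplex) (j : ℕ) : ℕ :=
  ((K.simplices j).filter fun t => ∀ u ∈ K.faces, t ⊆ u → u = t).card

end SComplex

open SComplex

namespace EntAux

variable {α β γ γ' δ : Type*}

/-- Filter with a fixed (classical) decidability instance. -/
noncomputable def fil (A : Finset α) (p : α → Prop) : Finset α :=
  @Finset.filter _ p (Classical.decPred p) A

lemma mem_fil {A : Finset α} {p : α → Prop} {a : α} : a ∈ fil A p ↔ a ∈ A ∧ p a := by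
  unfold fil
  exact @Finset.mem_filter _ _ (Classical.decPred p) A a

lemma fil_eq (A : Finset α) (p : α → Prop) [DecidablePred p] : fil A p = A.filter p :=
  Finset.filter_congr_decidable A p _

/-- Image with a fixed (classical) decidability instance. -/
noncomputable def img (A : Finset α) (g : α → β) : Finset β :=
  @Finset.image _ _ (Classical.decEq _) g A

lemma img_eq (A : Finset α) (g : α → β) [DecidableEq β] : img A g = A.image g := by
  unfold img
  ext y
  simp [Finset.mem_image]

lemma fil_congr {A : Finset α} {p q : α → Prop} (h : ∀ a ∈ A, (p a ↔ q a)) :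
    fil A p = fil A q := by
  ext a
  rw [mem_fil, mem_fil]
  exact ⟨fun ⟨ha, hp⟩ => ⟨ha, (h a ha).1 hp⟩, fun ⟨ha, hq⟩ => ⟨ha, (h a ha).2 hq⟩⟩

lemma fil_subset (A : Finset α) (p : α → Prop) : fil A p ⊆ A := by
  intro a ha; exact (mem_fil.1 ha).1

/-- Entropy of the map `g` w.r.t. the uniform distribution on `A`. -/
noncomputable def ent (A : Finset α) (g : α → β) : ℝ :=
  (A.card : ℝ)⁻¹ * ∑ a ∈ A, (Real.log A.card - Real.log ((fil A fun b => g b = g a).card))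

lemma fib_pos (A : Finset α) (g : α → β) {a : α} (ha : a ∈ A) :
    0 < ((fil A fun b => g b = g a).card) :=
  Finset.card_pos.2 ⟨a, mem_fil.2 ⟨ha, rfl⟩⟩

lemma sum_fib_gen (A : Finset α) (g : α → β) (v : β → ℝ) :
    ∑ a ∈ A, v (g a) * ((fil A fun b => g b = g a).card : ℝ)⁻¹
      = ∑ y ∈ img A g, v y := by
  classical
  rw [img_eq]
  rw [← Finset.sum_fiberwise_of_maps_to (fun a ha => Finset.mem_image_of_mem g ha)
    (fun a => v (g a) * ((fil A fun b => g b = g a).card : ℝ)⁻¹)]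
  refine Finset.sum_congr rfl ?_
  intro y hy
  have hfe : ∀ a ∈ A.filter (fun a => g a = y),
      v (g a) * ((fil A fun b => g b = g a).card : ℝ)⁻¹
        = v y * ((fil A fun b => g b = y).card : ℝ)⁻¹ := by
    intro a ha
    obtain ⟨haA, hga⟩ := Finset.mem_filter.1 ha
    rw [hga]
  rw [Finset.sum_congr rfl hfe, Finset.sum_const]
  obtain ⟨a, ha1, ha2⟩ := Finset.mem_image.1 hy
  have hpos : 0 < ((fil A fun b => g b = y).card) :=
    Finset.card_pos.2 ⟨a, mem_fil.2 ⟨ha1, ha2⟩⟩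
  have hcc : (A.filter fun a => g a = y).card = (fil A fun b => g b = y).card := by
    rw [fil_eq]
  rw [hcc, nsmul_eq_mul]
  field_simp

lemma ent_congr (A : Finset α) (g : α → β) (g' : α → γ)
    (h : ∀ a ∈ A, ∀ b ∈ A, (g b = g a ↔ g' b = g' a)) : ent A g = ent A g' := by
  unfold ent
  congr 1
  refine Finset.sum_congr rfl fun a ha => ?_
  rw [fil_congr (fun b hb => h a ha b hb)]

lemma ent_const (A : Finset α) (c : β) : ent A (fun _ => c) = 0 := by
  unfold ent
  have : ∀ a ∈ A, (Real.log A.card - Real.log ((fil A fun b => (fun _ => c) b = (fun _ => c) a).card)) = 0 := by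
    intro a ha
    have : (fil A fun b => (fun _ : α => c) b = (fun _ : α => c) a) = A := by
      ext x; rw [mem_fil]; simp
    rw [this]
    simp
  rw [Finset.sum_congr rfl this]
  simp

lemma ent_eq_log_card (A : Finset α) (g : α → β)
    (h : ∀ a ∈ A, ∀ b ∈ A, g b = g a → b = a) (hA : A.Nonempty) :
    ent A g = Real.log A.card := by
  unfold ent
  have : ∀ a ∈ A, (Real.log A.card - Real.log ((fil A fun b => g b = g a).card))
      = Real.log A.card - 0 := by
    intro a ha
    have : (fil A fun b => g b = g a) = {a} := by
      apply Finset.eq_singleton_iff_unique_mem.2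
      exact ⟨mem_fil.2 ⟨ha, rfl⟩, fun b hb => h a ha b (mem_fil.1 hb).1 (mem_fil.1 hb).2⟩
    rw [this]
    simp
  rw [Finset.sum_congr rfl this]
  rw [Finset.sum_const, nsmul_eq_mul]
  have : (A.card : ℝ) ≠ 0 := Nat.cast_ne_zero.2 hA.card_ne_zero
  field_simp
  ring

lemma ent_le_log (A : Finset α) (g : α → β) (hA : A.Nonempty) :
    ent A g ≤ Real.log ((img A g).card) := by
  classical
  rw [img_eq]
  have hN : (0:ℝ) < A.card := by exact_mod_cast Finset.card_pos.2 hA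
  have hK : (0:ℝ) < ((A.image g).card) := by
    exact_mod_cast Finset.card_pos.2 (hA.image g)
  rw [ent, inv_mul_le_iff₀ hN]
  have key : ∀ a ∈ A,
      Real.log A.card - Real.log ((fil A fun b => g b = g a).card)
        - Real.log ((A.image g).card)
      ≤ (A.card : ℝ) * ((A.image g).card : ℝ)⁻¹ * ((fil A fun b => g b = g a).card : ℝ)⁻¹ - 1 := by
    intro a ha
    have hf : (0:ℝ) < ((fil A fun b => g b = g a).card) := by
      exact_mod_cast fib_pos A g ha
    have hx : (0:ℝ) < (A.card : ℝ) * ((A.image g).card : ℝ)⁻¹ * ((fil A fun b => g b = g a).card : ℝ)⁻¹ := by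
      positivity
    have := Real.log_le_sub_one_of_pos hx
    calc Real.log A.card - Real.log ((fil A fun b => g b = g a).card)
          - Real.log ((A.image g).card)
        = Real.log ((A.card : ℝ) * ((A.image g).card : ℝ)⁻¹ * ((fil A fun b => g b = g a).card : ℝ)⁻¹) := by
          rw [Real.log_mul (by positivity) (by positivity), Real.log_mul hN.ne' (by positivity),
            Real.log_inv, Real.log_inv]
          ring
      _ ≤ _ := this
  have hsum := Finset.sum_le_sum key
  have hleft : ∑ a ∈ A, (Real.log A.card - Real.log ((fil A fun b => g b = g a).card)
      - Real.log ((A.image g).card))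
      = (∑ a ∈ A, (Real.log A.card - Real.log ((fil A fun b => g b = g a).card)))
        - A.card * Real.log ((A.image g).card) := by
    rw [Finset.sum_sub_distrib, Finset.sum_const, nsmul_eq_mul]
  have hright : ∑ a ∈ A, ((A.card : ℝ) * ((A.image g).card : ℝ)⁻¹ * ((fil A fun b => g b = g a).card : ℝ)⁻¹ - 1)
      = 0 := by
    rw [Finset.sum_sub_distrib, Finset.sum_const, nsmul_eq_mul, mul_one]
    have : ∑ a ∈ A, (A.card : ℝ) * ((A.image g).card : ℝ)⁻¹ * ((fil A fun b => g b = g a).card : ℝ)⁻¹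
        = ∑ a ∈ A, (fun _ : β => (A.card : ℝ) * ((A.image g).card : ℝ)⁻¹) (g a) * ((fil A fun b => g b = g a).card : ℝ)⁻¹ := rfl
    rw [this, sum_fib_gen A g (fun _ => (A.card : ℝ) * ((A.image g).card : ℝ)⁻¹), img_eq, Finset.sum_const, nsmul_eq_mul]
    field_simp
    ring
  rw [hleft, hright] at hsum
  linarith [hsum]

lemma mem_img {A : Finset α} {g : α → γ} {y : γ} : y ∈ img A g ↔ ∃ a ∈ A, g a = y := by
  unfold img
  rw [@Finset.mem_image _ _ (Classical.decEq _)]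

lemma key_count (A : Finset α) (f : α → δ) (g : α → γ) (u : γ → γ') :
    ∑ a ∈ A, ((fil A fun b => g b = g a).card : ℝ)
        * ((fil A fun b => u (g b) = u (g a) ∧ f b = f a).card : ℝ)
        * ((fil A fun b => u (g b) = u (g a)).card : ℝ)⁻¹
        * ((fil A fun b => g b = g a ∧ f b = f a).card : ℝ)⁻¹
      ≤ (A.card : ℝ) := by
  set κ : α → γ × δ := fun a => (g a, f a) with hκ
  set v : γ × δ → ℝ := fun p =>
    ((fil A fun b => g b = p.1).card : ℝ)
      * ((fil A fun b => u (g b) = u p.1 ∧ f b = p.2).card : ℝ)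
      * ((fil A fun b => u (g b) = u p.1).card : ℝ)⁻¹ with hv
  have hstep1 : ∑ a ∈ A, ((fil A fun b => g b = g a).card : ℝ)
        * ((fil A fun b => u (g b) = u (g a) ∧ f b = f a).card : ℝ)
        * ((fil A fun b => u (g b) = u (g a)).card : ℝ)⁻¹
        * ((fil A fun b => g b = g a ∧ f b = f a).card : ℝ)⁻¹
      = ∑ a ∈ A, v (κ a) * ((fil A fun b => κ b = κ a).card : ℝ)⁻¹ := by
    refine Finset.sum_congr rfl fun a ha => ?_
    have hfe : (fil A fun b => κ b = κ a) = (fil A fun b => g b = g a ∧ f b = f a) := by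
      apply fil_congr
      intro b hb
      simp [hκ, Prod.ext_iff]
    rw [hfe]
  have hstep : ∑ a ∈ A, ((fil A fun b => g b = g a).card : ℝ)
        * ((fil A fun b => u (g b) = u (g a) ∧ f b = f a).card : ℝ)
        * ((fil A fun b => u (g b) = u (g a)).card : ℝ)⁻¹
        * ((fil A fun b => g b = g a ∧ f b = f a).card : ℝ)⁻¹
      = ∑ p ∈ img A κ, v p := hstep1.trans (sum_fib_gen A κ v)
  rw [hstep]
  classical
  have hmaps : ∀ p ∈ img A κ, p.1 ∈ img A g := by
    rintro p hp
    obtain ⟨a, ha, rfl⟩ := mem_img.1 hp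
    exact mem_img.2 ⟨a, ha, rfl⟩
  rw [← Finset.sum_fiberwise_of_maps_to hmaps v]
  have hinner : ∀ c ∈ img A g,
      ∑ p ∈ (img A κ).filter (fun p => p.1 = c), v p
        ≤ ((fil A fun b => g b = c).card : ℝ) := by
    intro c hc
    obtain ⟨a₀, ha₀, rfl⟩ := mem_img.1 hc
    have hhpos : (0:ℝ) < ((fil A fun b => u (g b) = u (g a₀)).card : ℝ) := by
      have : a₀ ∈ fil A fun b => u (g b) = u (g a₀) := mem_fil.2 ⟨ha₀, rfl⟩
      exact_mod_cast Finset.card_pos.2 ⟨a₀, this⟩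
    have hveq : ∀ p ∈ (img A κ).filter (fun p => p.1 = g a₀),
        v p = ((fil A fun b => g b = g a₀).card : ℝ)
          * ((fil A fun b => u (g b) = u (g a₀)).card : ℝ)⁻¹
          * ((fil A fun b => u (g b) = u (g a₀) ∧ f b = p.2).card : ℝ) := by
      intro p hp
      obtain ⟨-, h1⟩ := Finset.mem_filter.1 hp
      rw [hv]
      simp only [h1]
      ring
    rw [Finset.sum_congr rfl hveq, ← Finset.mul_sum]
    have hcard : ∑ p ∈ (img A κ).filter (fun p => p.1 = g a₀),
        ((fil A fun b => u (g b) = u (g a₀) ∧ f b = p.2).card : ℝ)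
        ≤ ((fil A fun b => u (g b) = u (g a₀)).card : ℝ) := by
      have hdisj : ∀ p ∈ (img A κ).filter (fun p => p.1 = g a₀),
          ∀ q ∈ (img A κ).filter (fun p => p.1 = g a₀), p ≠ q →
            Disjoint (fil A fun b => u (g b) = u (g a₀) ∧ f b = p.2)
              (fil A fun b => u (g b) = u (g a₀) ∧ f b = q.2) := by
        intro p hp q hq hpq
        have hp1 := (Finset.mem_filter.1 hp).2
        have hq1 := (Finset.mem_filter.1 hq).2
        have hsnd : p.2 ≠ q.2 := by
          intro h
          exact hpq (Prod.ext (hp1.trans hq1.symm) h)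
        refine Finset.disjoint_left.2 fun b hb1 hb2 => ?_
        exact hsnd (((mem_fil.1 hb1).2.2).symm.trans ((mem_fil.1 hb2).2.2))
      have hbu : (((img A κ).filter (fun p => p.1 = g a₀)).biUnion
            (fun p => fil A fun b => u (g b) = u (g a₀) ∧ f b = p.2))
          ⊆ fil A fun b => u (g b) = u (g a₀) := by
        intro b hb
        obtain ⟨p, hp, hbp⟩ := Finset.mem_biUnion.1 hb
        obtain ⟨hbA, hb1, -⟩ := mem_fil.1 hbp
        exact mem_fil.2 ⟨hbA, hb1⟩
      calc ∑ p ∈ (img A κ).filter (fun p => p.1 = g a₀),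
            ((fil A fun b => u (g b) = u (g a₀) ∧ f b = p.2).card : ℝ)
          = (((((img A κ).filter (fun p => p.1 = g a₀))).biUnion
              (fun p => fil A fun b => u (g b) = u (g a₀) ∧ f b = p.2)).card : ℝ) := by
            rw [Finset.card_biUnion hdisj]; push_cast; ring
        _ ≤ _ := by exact_mod_cast Finset.card_le_card hbu
    calc ((fil A fun b => g b = g a₀).card : ℝ)
          * ((fil A fun b => u (g b) = u (g a₀)).card : ℝ)⁻¹
          * ∑ p ∈ (img A κ).filter (fun p => p.1 = g a₀),
            ((fil A fun b => u (g b) = u (g a₀) ∧ f b = p.2).card : ℝ)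
        ≤ ((fil A fun b => g b = g a₀).card : ℝ)
          * ((fil A fun b => u (g b) = u (g a₀)).card : ℝ)⁻¹
          * ((fil A fun b => u (g b) = u (g a₀)).card : ℝ) := by
          apply mul_le_mul_of_nonneg_left hcard
          positivity
      _ = ((fil A fun b => g b = g a₀).card : ℝ) := by
          field_simp
  calc ∑ c ∈ img A g, ∑ p ∈ (img A κ).filter (fun p => p.1 = c), v p
      ≤ ∑ c ∈ img A g, ((fil A fun b => g b = c).card : ℝ) :=
        Finset.sum_le_sum hinner
    _ = (A.card : ℝ) := by
        rw [← Nat.cast_sum]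
        congr 1
        have := Finset.card_eq_sum_card_fiberwise
          (f := g) (s := A) (t := img A g) (fun a ha => mem_img.2 ⟨a, ha, rfl⟩)
        rw [this]
        refine Finset.sum_congr rfl fun c hc => ?_
        rw [show (fil A fun b => g b = c) = A.filter (fun a => g a = c) from
          Finset.filter_congr_decidable _ _ _]

lemma ent_pair (A : Finset α) (f : α → δ) (h : α → γ') :
      ent A (fun a => (f a, h a))
        = (A.card : ℝ)⁻¹ * ∑ a ∈ A,
          (Real.log A.card - Real.log ((fil A fun b => h b = h a ∧ f b = f a).card)) := by
  unfold ent
  congr 1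
  refine Finset.sum_congr rfl fun a ha => ?_
  have hfe := fil_congr (A := A) (p := fun b => (f b, h b) = (f a, h a))
    (q := fun b => h b = h a ∧ f b = f a) (fun b hb => by
      constructor
      · intro hh
        exact ⟨(Prod.ext_iff.1 hh).2, (Prod.ext_iff.1 hh).1⟩
      · intro hh
        exact Prod.ext hh.2 hh.1)
  beta_reduce
  rw [hfe]

/-- Conditioning on more refined information reduces conditional entropy. -/
lemma submod (A : Finset α) (f : α → δ) (g : α → γ) (u : γ → γ') :
    ent A (fun a => (f a, g a)) - ent A g
      ≤ ent A (fun a => (f a, u (g a))) - ent A (fun a => u (g a)) := by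
  rcases A.eq_empty_or_nonempty with rfl | hA
  · simp [ent]
  have hN : (0:ℝ) < A.card := by exact_mod_cast Finset.card_pos.2 hA
  have e1 : ent A (fun a => (f a, g a))
      = (A.card : ℝ)⁻¹ * ∑ a ∈ A,
        (Real.log A.card - Real.log ((fil A fun b => g b = g a ∧ f b = f a).card)) :=
    ent_pair A f g
  have e2 : ent A (fun a => (f a, u (g a)))
      = (A.card : ℝ)⁻¹ * ∑ a ∈ A,
        (Real.log A.card - Real.log ((fil A fun b => u (g b) = u (g a) ∧ f b = f a).card)) :=
    ent_pair A f (fun a => u (g a))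
  have e3 : ent A (fun a => u (g a))
      = (A.card : ℝ)⁻¹ * ∑ a ∈ A,
        (Real.log A.card - Real.log ((fil A fun b => u (g b) = u (g a)).card)) := rfl
  have e4 : ent A g
      = (A.card : ℝ)⁻¹ * ∑ a ∈ A,
        (Real.log A.card - Real.log ((fil A fun b => g b = g a).card)) := rfl
  rw [e1, e2, e3, e4]
  have hmain : ∑ a ∈ A,
      (Real.log ((fil A fun b => g b = g a).card)
        - Real.log ((fil A fun b => g b = g a ∧ f b = f a).card)
        - Real.log ((fil A fun b => u (g b) = u (g a)).card)
        + Real.log ((fil A fun b => u (g b) = u (g a) ∧ f b = f a).card)) ≤ 0 := by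
    have hpt : ∀ a ∈ A,
        Real.log ((fil A fun b => g b = g a).card)
          - Real.log ((fil A fun b => g b = g a ∧ f b = f a).card)
          - Real.log ((fil A fun b => u (g b) = u (g a)).card)
          + Real.log ((fil A fun b => u (g b) = u (g a) ∧ f b = f a).card)
        ≤ ((fil A fun b => g b = g a).card : ℝ)
            * ((fil A fun b => u (g b) = u (g a) ∧ f b = f a).card : ℝ)
            * ((fil A fun b => u (g b) = u (g a)).card : ℝ)⁻¹
            * ((fil A fun b => g b = g a ∧ f b = f a).card : ℝ)⁻¹ - 1 := by
      intro a ha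
      have p1 : (0:ℝ) < ((fil A fun b => g b = g a).card : ℝ) := by
        exact_mod_cast Finset.card_pos.2
          ⟨a, (mem_fil (p := fun b => g b = g a)).2 ⟨ha, rfl⟩⟩
      have p2 : (0:ℝ) < ((fil A fun b => g b = g a ∧ f b = f a).card : ℝ) := by
        exact_mod_cast Finset.card_pos.2
          ⟨a, (mem_fil (p := fun b => g b = g a ∧ f b = f a)).2 ⟨ha, rfl, rfl⟩⟩
      have p3 : (0:ℝ) < ((fil A fun b => u (g b) = u (g a)).card : ℝ) := by
        exact_mod_cast Finset.card_pos.2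
          ⟨a, (mem_fil (p := fun b => u (g b) = u (g a))).2 ⟨ha, rfl⟩⟩
      have p4 : (0:ℝ) < ((fil A fun b => u (g b) = u (g a) ∧ f b = f a).card : ℝ) := by
        exact_mod_cast Finset.card_pos.2
          ⟨a, (mem_fil (p := fun b => u (g b) = u (g a) ∧ f b = f a)).2 ⟨ha, rfl, rfl⟩⟩
      have hx : (0:ℝ) < ((fil A fun b => g b = g a).card : ℝ)
          * ((fil A fun b => u (g b) = u (g a) ∧ f b = f a).card : ℝ)
          * ((fil A fun b => u (g b) = u (g a)).card : ℝ)⁻¹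
          * ((fil A fun b => g b = g a ∧ f b = f a).card : ℝ)⁻¹ := by positivity
      have hlog := Real.log_le_sub_one_of_pos hx
      have heq : Real.log (((fil A fun b => g b = g a).card : ℝ)
          * ((fil A fun b => u (g b) = u (g a) ∧ f b = f a).card : ℝ)
          * ((fil A fun b => u (g b) = u (g a)).card : ℝ)⁻¹
          * ((fil A fun b => g b = g a ∧ f b = f a).card : ℝ)⁻¹)
          = Real.log ((fil A fun b => g b = g a).card)
          - Real.log ((fil A fun b => g b = g a ∧ f b = f a).card)
          - Real.log ((fil A fun b => u (g b) = u (g a)).card)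
          + Real.log ((fil A fun b => u (g b) = u (g a) ∧ f b = f a).card) := by
        rw [Real.log_mul (by positivity) (by positivity),
          Real.log_mul (by positivity) (by positivity),
          Real.log_mul (by positivity) (by positivity),
          Real.log_inv, Real.log_inv]
        ring
      rw [heq] at hlog
      exact hlog
    calc ∑ a ∈ A, (Real.log ((fil A fun b => g b = g a).card)
          - Real.log ((fil A fun b => g b = g a ∧ f b = f a).card)
          - Real.log ((fil A fun b => u (g b) = u (g a)).card)
          + Real.log ((fil A fun b => u (g b) = u (g a) ∧ f b = f a).card))
        ≤ ∑ a ∈ A, (((fil A fun b => g b = g a).card : ℝ)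
            * ((fil A fun b => u (g b) = u (g a) ∧ f b = f a).card : ℝ)
            * ((fil A fun b => u (g b) = u (g a)).card : ℝ)⁻¹
            * ((fil A fun b => g b = g a ∧ f b = f a).card : ℝ)⁻¹ - 1) :=
          Finset.sum_le_sum hpt
      _ = (∑ a ∈ A, ((fil A fun b => g b = g a).card : ℝ)
            * ((fil A fun b => u (g b) = u (g a) ∧ f b = f a).card : ℝ)
            * ((fil A fun b => u (g b) = u (g a)).card : ℝ)⁻¹
            * ((fil A fun b => g b = g a ∧ f b = f a).card : ℝ)⁻¹) - A.card := by
          rw [Finset.sum_sub_distrib, Finset.sum_const, nsmul_eq_mul, mul_one]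
      _ ≤ 0 := by
          have := key_count A f g u
          linarith
  rw [← mul_sub, ← mul_sub, ← Finset.sum_sub_distrib, ← Finset.sum_sub_distrib]
  apply mul_le_mul_of_nonneg_left _ (inv_nonneg.2 hN.le)
  rw [← sub_nonpos, ← Finset.sum_sub_distrib]
  calc ∑ a ∈ A, ((Real.log A.card - Real.log ((fil A fun b => g b = g a ∧ f b = f a).card)
          - (Real.log A.card - Real.log ((fil A fun b => g b = g a).card)))
        - (Real.log A.card - Real.log ((fil A fun b => u (g b) = u (g a) ∧ f b = f a).card)
          - (Real.log A.card - Real.log ((fil A fun b => u (g b) = u (g a)).card))))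
      = ∑ a ∈ A, (Real.log ((fil A fun b => g b = g a).card)
          - Real.log ((fil A fun b => g b = g a ∧ f b = f a).card)
          - Real.log ((fil A fun b => u (g b) = u (g a)).card)
          + Real.log ((fil A fun b => u (g b) = u (g a) ∧ f b = f a).card)) :=
        Finset.sum_congr rfl fun a _ => by ring
    _ ≤ 0 := hmain

lemma telescope (e : Finset ℕ → ℝ) (V : Finset ℕ) :
    ∑ v ∈ V, (e (V.filter (· ≤ v)) - e (V.filter (· < v))) = e V - e ∅ := by
  induction V using Finset.induction_on_max with
  | empty => simp
  | insert a s ha ih =>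
    have hanotin : a ∉ s := fun h => lt_irrefl a (ha a h)
    rw [Finset.sum_insert hanotin]
    have h1 : (insert a s).filter (· ≤ a) = insert a s := by
      apply Finset.filter_eq_self.2
      intro x hx
      rcases Finset.mem_insert.1 hx with rfl | hx
      · exact le_refl x
      · exact (ha x hx).le
    have h2 : (insert a s).filter (· < a) = s := by
      ext w
      simp only [Finset.mem_filter, Finset.mem_insert]
      constructor
      · rintro ⟨rfl | hw, hlt⟩
        · exact absurd hlt (lt_irrefl w)
        · exact hw
      · intro hw
        exact ⟨Or.inr hw, ha w hw⟩
    have h3 : ∀ v ∈ s, (insert a s).filter (· ≤ v) = s.filter (· ≤ v) := by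
      intro v hv
      rw [Finset.filter_insert, if_neg (by exact not_le.2 (ha v hv))]
    have h4 : ∀ v ∈ s, (insert a s).filter (· < v) = s.filter (· < v) := by
      intro v hv
      rw [Finset.filter_insert, if_neg (by exact not_lt.2 (ha v hv).le)]
    have h5 : ∑ v ∈ s, (e ((insert a s).filter (· ≤ v)) - e ((insert a s).filter (· < v)))
        = ∑ v ∈ s, (e (s.filter (· ≤ v)) - e (s.filter (· < v))) := by
      refine Finset.sum_congr rfl fun v hv => ?_
      rw [h3 v hv, h4 v hv]
    rw [h1, h2, h5, ih]
    ring

/-- Restriction of a function to a finite set (0 outside). -/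
def R (S : Finset ℕ) (φ : ℕ → ℕ) : ℕ → ℕ := fun w => if w ∈ S then φ w else 0

lemma R_eq_iff {S : Finset ℕ} {a b : ℕ → ℕ} : R S a = R S b ↔ ∀ w ∈ S, a w = b w := by
  constructor
  · intro h w hw
    have := congrFun h w
    simpa [R, hw] using this
  · intro h
    funext w
    by_cases hw : w ∈ S
    · simp [R, hw, h w hw]
    · simp [R, hw]

lemma ent_R_empty (A : Finset (ℕ → ℕ)) : ent A (R ∅) = 0 := by
  have : R ∅ = fun _ => (fun _ => (0:ℕ)) := by
    funext φ w
    simp [R]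
  rw [this]
  exact ent_const A _

lemma ent_split (A : Finset (ℕ → ℕ)) (W : Finset ℕ) {v : ℕ} (hvW : v ∈ W) :
    ent A (R (W.filter (· ≤ v))) = ent A (fun a => (a v, R (W.filter (· < v)) a)) := by
  apply ent_congr
  intro a _ b _
  constructor
  · intro h
    refine Prod.ext ?_ ?_
    · exact R_eq_iff.1 h v (Finset.mem_filter.2 ⟨hvW, le_refl v⟩)
    · apply R_eq_iff.2
      intro w hw
      obtain ⟨hwW, hwlt⟩ := Finset.mem_filter.1 hw
      exact R_eq_iff.1 h w (Finset.mem_filter.2 ⟨hwW, hwlt.le⟩)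
  · intro h
    have h1 := (Prod.ext_iff.1 h).1
    have h2 := (Prod.ext_iff.1 h).2
    apply R_eq_iff.2
    intro w hw
    obtain ⟨hwW, hwle⟩ := Finset.mem_filter.1 hw
    rcases lt_or_eq_of_le hwle with hlt | rfl
    · exact R_eq_iff.1 h2 w (Finset.mem_filter.2 ⟨hwW, hlt⟩)
    · exact h1

/-- The conditional entropy increment of vertex `v` in the exposure ordering of `V`. -/
noncomputable def hsv (A : Finset (ℕ → ℕ)) (V : Finset ℕ) (v : ℕ) : ℝ :=
  ent A (R (V.filter (· ≤ v))) - ent A (R (V.filter (· < v)))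

lemma sum_hsv (A : Finset (ℕ → ℕ)) (V : Finset ℕ) :
    ∑ v ∈ V, hsv A V v = ent A (R V) := by
  have := telescope (fun S => ent A (R S)) V
  beta_reduce at this
  unfold hsv
  rw [this, ent_R_empty]
  ring

lemma chain_bound (A : Finset (ℕ → ℕ)) (V T : Finset ℕ) (hTV : T ⊆ V) :
    ∑ v ∈ T, hsv A V v ≤ ent A (R T) := by
  have per : ∀ v ∈ T, hsv A V v
      ≤ ent A (R (T.filter (· ≤ v))) - ent A (R (T.filter (· < v))) := by
    intro v hvT
    have hvV := hTV hvT
    have hUpt : ∀ a : ℕ → ℕ, R (T.filter (· < v)) (R (V.filter (· < v)) a)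
        = R (T.filter (· < v)) a := by
      intro a
      funext w
      by_cases hw : w ∈ T.filter (· < v)
      · have hw' : w ∈ V.filter (· < v) :=
          Finset.mem_filter.2 ⟨hTV (Finset.mem_filter.1 hw).1, (Finset.mem_filter.1 hw).2⟩
        simp [R, hw, hw', Finset.mem_filter.1 hw']
      · simp [R, hw]
    have hsub := submod A (fun a => a v) (fun a => R (V.filter (· < v)) a)
      (R (T.filter (· < v)))
    simp only [hUpt] at hsub
    calc hsv A V v
        = ent A (fun a => (a v, R (V.filter (· < v)) a)) - ent A (R (V.filter (· < v))) := by
          unfold hsv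
          rw [ent_split A V hvV]
      _ ≤ ent A (fun a => (a v, R (T.filter (· < v)) a)) - ent A (fun a => R (T.filter (· < v)) a) :=
          hsub
      _ = ent A (R (T.filter (· ≤ v))) - ent A (R (T.filter (· < v))) := by
          rw [ent_split A T hvT]
  calc ∑ v ∈ T, hsv A V v
      ≤ ∑ v ∈ T, (ent A (R (T.filter (· ≤ v))) - ent A (R (T.filter (· < v)))) :=
        Finset.sum_le_sum per
    _ = ent A (R T) - ent A (R ∅) := telescope (fun S => ent A (R S)) T
    _ = ent A (R T) := by rw [ent_R_empty]; ring

end EntAux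

section MainAux

open EntAux

lemma aux_subset_verts (G : SComplex) {σ : Finset ℕ} (h : σ ∈ G.faces) : σ ⊆ G.verts :=
  fun w hw => Finset.mem_sup.2 ⟨σ, h, hw⟩

lemma aux_singleton_mem (G : SComplex) {v : ℕ} (h : v ∈ G.verts) : {v} ∈ G.faces := by
  obtain ⟨σ, hσ, hvσ⟩ := Finset.mem_sup.1 h
  exact G.down_closed σ hσ {v} (Finset.singleton_subset_iff.2 hvσ) (by simp)

lemma aux_s0_eq (G : SComplex) : G.s 0 = G.verts.card := by
  classical
  rw [SComplex.s, SComplex.simplices]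
  have himg : G.faces.filter (fun s => s.card = 0 + 1) = G.verts.image (fun v => {v}) := by
    ext σ
    simp only [Finset.mem_filter, Finset.mem_image]
    constructor
    · rintro ⟨hσ, hc⟩
      obtain ⟨v, rfl⟩ := Finset.card_eq_one.1 (by simpa using hc)
      exact ⟨v, aux_subset_verts G hσ (Finset.mem_singleton_self v), rfl⟩
    · rintro ⟨v, hv, rfl⟩
      exact ⟨aux_singleton_mem G hv, by simp⟩
  rw [himg, Finset.card_image_of_injective _ (fun a b h => Finset.singleton_injective h)]

end MainAux

open EntAux

/-- inequality `e:upper.bound.n0FG`: if `G` has dimension `k ≥ 1`,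
`m₀,…,m_k` are positive integers with `s_i(G) ≤ m_i`, and `F` is a simplicial complex of
dimension at most `k` with `s_i(F) ≤ m_i` for `i ≤ k`, then
`n_o(F,G) ≤ s₀(G)^{s₀(G)} · exp(γ(m₀,…,m_k;G))`. -/
theorem stmt_1 (k : ℕ) (hk : 1 ≤ k) (G : SComplex) (hGdim : G.dim = k)
    (m : ℕ → ℕ) (hm : ∀ i ≤ k, 0 < m i) (hGm : ∀ i ≤ k, G.s i ≤ m i)
    (F : SComplex) (hFdim : F.dim ≤ k) (hFm : ∀ i ≤ k, F.s i ≤ m i) :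
    (nOrdered F G : ℝ) ≤ (G.s 0 : ℝ) ^ (G.s 0) * Real.exp (gammaLP m k G) := by
  classical
  set V : Finset ℕ := G.verts with hVdef
  set n : ℕ := V.card with hndef
  have hs0 : G.s 0 = n := aux_s0_eq G
  have hVne : V.Nonempty := by
    obtain ⟨σ₀, hσ₀⟩ := G.faces_nonempty
    have hne : σ₀.Nonempty :=
      Finset.nonempty_iff_ne_empty.2 (fun h => G.empty_not_mem (h ▸ hσ₀))
    obtain ⟨v, hv⟩ := hne
    exact ⟨v, aux_subset_verts G hσ₀ hv⟩
  have hn1 : 1 ≤ n := Finset.card_pos.2 hVne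
  -- finiteness of the set of ordered copies
  have hfin : {φ : ℕ → ℕ | IsOrderedCopy F G φ}.Finite := by
    apply Set.Finite.subset (Finset.finite_toSet
      ((V.pi (fun _ => F.verts)).image (fun ψ w => if h : w ∈ V then ψ w h else 0)))
    rintro φ ⟨hinj, hzero, hface⟩
    refine Finset.mem_coe.2 (Finset.mem_image.2 ⟨fun w _ => φ w, ?_, ?_⟩)
    · refine Finset.mem_pi.2 fun w hw => ?_
      have h1 : ({w} : Finset ℕ) ∈ G.faces := aux_singleton_mem G hw
      have h2 : ({w} : Finset ℕ).image φ ∈ F.faces := hface _ h1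
      rw [Finset.image_singleton] at h2
      exact Finset.mem_sup.2 ⟨{φ w}, h2, Finset.mem_singleton_self _⟩
    · funext w
      by_cases hw : w ∈ V
      · simp [hw]
      · simp [hw, hzero w hw]
  set A : Finset (ℕ → ℕ) := hfin.toFinset with hAdef
  have hmemA : ∀ φ : ℕ → ℕ, φ ∈ A ↔ IsOrderedCopy F G φ := fun φ => Set.Finite.mem_toFinset hfin
  have hno : (nOrdered F G : ℝ) = (A.card : ℝ) := by
    rw [nOrdered]
    norm_cast
    exact Set.ncard_eq_toFinset_card _ hfin
  rcases A.eq_empty_or_nonempty with hAe | hA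
  · rw [hno, hAe]
    simp only [Finset.card_empty, Nat.cast_zero]
    positivity
  have hNpos : (0:ℝ) < A.card := by exact_mod_cast Finset.card_pos.2 hA
  set x : ℕ → ℝ := fun v => if v ∈ V then max 0 (hsv A V v - Real.log n) else 0 with hxdef
  -- counting the projections of copies to a subset of a simplex
  have hcount : ∀ i, i ≤ k → ∀ σ ∈ G.simplices i, ∀ T ⊆ σ,
      (img A (R T)).card ≤ m i * (i+1) ^ (T.card) := by
    intro i hik σ hσ T hTσ
    rw [img_eq]
    have hσf : σ ∈ G.faces := (Finset.mem_filter.1 hσ).1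
    have hσc : σ.card = i + 1 := (Finset.mem_filter.1 hσ).2
    have hsubB : A.image (R T) ⊆ (F.simplices i).biUnion
        (fun τ => (T.pi (fun _ => τ)).image (fun ψ w => if h : w ∈ T then ψ w h else 0)) := by
      intro ψ hψ
      obtain ⟨a, haA, rfl⟩ := Finset.mem_image.1 hψ
      obtain ⟨hainj, hazero, haface⟩ := (hmemA a).1 haA
      have hτf : σ.image a ∈ F.faces := haface σ hσf
      have hτc : (σ.image a).card = i + 1 := by
        rw [Finset.card_image_of_injOn (hainj.mono (Finset.coe_subset.2 (aux_subset_verts G hσf))),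
          hσc]
      refine Finset.mem_biUnion.2 ⟨σ.image a, Finset.mem_filter.2 ⟨hτf, hτc⟩, ?_⟩
      refine Finset.mem_image.2 ⟨fun w _ => a w, ?_, ?_⟩
      · exact Finset.mem_pi.2 fun w hw => Finset.mem_image_of_mem a (hTσ hw)
      · funext w
        by_cases hw : w ∈ T
        · simp [R, hw]
        · simp [R, hw]
    calc (A.image (R T)).card
        ≤ ((F.simplices i).biUnion
            (fun τ => (T.pi (fun _ => τ)).image (fun ψ w => if h : w ∈ T then ψ w h else 0))).card :=
          Finset.card_le_card hsubB
      _ ≤ ∑ τ ∈ F.simplices i,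
            ((T.pi (fun _ => τ)).image (fun ψ w => if h : w ∈ T then ψ w h else 0)).card :=
          Finset.card_biUnion_le
      _ ≤ ∑ τ ∈ F.simplices i, (i+1) ^ (T.card) := by
          refine Finset.sum_le_sum fun τ hτ => ?_
          have hτc : τ.card = i + 1 := (Finset.mem_filter.1 hτ).2
          calc ((T.pi (fun _ => τ)).image (fun ψ w => if h : w ∈ T then ψ w h else 0)).card
              ≤ (T.pi (fun _ => τ)).card := Finset.card_image_le
            _ = ∏ _w ∈ T, τ.card := Finset.card_pi T _
            _ = (i+1) ^ (T.card) := by rw [Finset.prod_const, hτc]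
      _ = (F.s i) * (i+1) ^ (T.card) := by
          rw [Finset.sum_const, smul_eq_mul]
          rfl
      _ ≤ m i * (i+1) ^ (T.card) := Nat.mul_le_mul_right _ (hFm i hik)
  -- feasibility of x for the linear program
  have hfeas : ∀ i ≤ k, ∀ σ ∈ G.simplices i,
      0 ≤ ∑ v ∈ σ, x v ∧ ∑ v ∈ σ, x v ≤ Real.log (m i) := by
    intro i hik σ hσ
    have hσf : σ ∈ G.faces := (Finset.mem_filter.1 hσ).1
    have hσc : σ.card = i + 1 := (Finset.mem_filter.1 hσ).2
    have hσV : σ ⊆ V := aux_subset_verts G hσf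
    have hxnonneg : ∀ v, 0 ≤ x v := by
      intro v
      simp only [hxdef]
      split
      · exact le_max_left _ _
      · exact le_refl 0
    refine ⟨Finset.sum_nonneg fun v _ => hxnonneg v, ?_⟩
    set T := σ.filter (fun v => Real.log n < hsv A V v) with hTdef
    have hTσ : T ⊆ σ := Finset.filter_subset _ _
    have hsum : ∑ v ∈ σ, x v = ∑ v ∈ T, (hsv A V v - Real.log n) := by
      have h1 : ∀ v ∈ σ, x v = if Real.log n < hsv A V v then hsv A V v - Real.log n else 0 := by
        intro v hv
        simp only [hxdef]
        rw [if_pos (hσV hv)]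
        by_cases hc : Real.log n < hsv A V v
        · rw [if_pos hc, max_eq_right (by linarith)]
        · rw [if_neg hc, max_eq_left (by linarith [not_lt.1 hc])]
      rw [Finset.sum_congr rfl h1, hTdef, Finset.sum_filter]
    have hchain := chain_bound A V T (hTσ.trans hσV)
    have hlelog := ent_le_log A (R T) hA
    have himgpos : (0:ℝ) < ((img A (R T)).card : ℝ) := by
      obtain ⟨a, ha⟩ := hA
      have : R T a ∈ img A (R T) := mem_img.2 ⟨a, ha, rfl⟩
      exact_mod_cast Finset.card_pos.2 ⟨R T a, this⟩
    have hcntR : ((img A (R T)).card : ℝ) ≤ (m i : ℝ) * ((i+1 : ℕ) : ℝ) ^ (T.card) := by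
      exact_mod_cast hcount i hik σ hσ T hTσ
    have hlog1 : Real.log ((img A (R T)).card)
        ≤ Real.log ((m i : ℝ) * ((i+1 : ℕ) : ℝ) ^ (T.card)) :=
      Real.log_le_log himgpos hcntR
    have hmpos : (0:ℝ) < (m i : ℝ) := by exact_mod_cast hm i hik
    have hipos : (0:ℝ) < ((i+1 : ℕ) : ℝ) := by positivity
    have hlog2 : Real.log ((m i : ℝ) * ((i+1 : ℕ) : ℝ) ^ (T.card))
        = Real.log (m i) + (T.card : ℝ) * Real.log ((i+1 : ℕ) : ℝ) := by
      rw [Real.log_mul hmpos.ne' (by positivity), Real.log_pow]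
    have hin : ((i+1 : ℕ) : ℝ) ≤ (n : ℝ) := by
      have h1 : i + 1 ≤ n := by
        rw [← hσc, hndef]
        exact Finset.card_le_card hσV
      exact_mod_cast h1
    have hlogn : Real.log ((i+1 : ℕ) : ℝ) ≤ Real.log n := Real.log_le_log hipos hin
    have hTn : (0:ℝ) ≤ (T.card : ℝ) := by positivity
    have h5 := mul_le_mul_of_nonneg_left hlogn hTn
    calc ∑ v ∈ σ, x v = ∑ v ∈ T, (hsv A V v - Real.log n) := hsum
      _ = (∑ v ∈ T, hsv A V v) - (T.card : ℝ) * Real.log n := by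
          rw [Finset.sum_sub_distrib, Finset.sum_const, nsmul_eq_mul]
      _ ≤ Real.log (m i) := by linarith
  -- objective value
  have hobj : Real.log A.card ≤ (∑ v ∈ V, x v) + (n : ℝ) * Real.log n := by
    have h1 : ∑ v ∈ V, hsv A V v = ent A (R V) := sum_hsv A V
    have h2 : ent A (R V) = Real.log A.card := by
      apply ent_eq_log_card A (R V) ?_ hA
      intro a haA b hbA hab
      funext w
      by_cases hw : w ∈ V
      · exact R_eq_iff.1 hab w hw
      · rw [((hmemA b).1 hbA).2.1 w hw, ((hmemA a).1 haA).2.1 w hw]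
    have h3 : ∀ v ∈ V, hsv A V v - Real.log n ≤ x v := by
      intro v hv
      simp only [hxdef]
      rw [if_pos hv]
      exact le_max_right _ _
    have h4 : ∑ v ∈ V, (hsv A V v - Real.log n) ≤ ∑ v ∈ V, x v := Finset.sum_le_sum h3
    have h5 : ∑ v ∈ V, (hsv A V v - Real.log n) = Real.log A.card - (n : ℝ) * Real.log n := by
      rw [Finset.sum_sub_distrib, Finset.sum_const, nsmul_eq_mul, h1, h2, hndef]
    linarith
  -- the LP value bounds the objective
  have hγ : (∑ v ∈ V, x v) ≤ gammaLP m k G := by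
    have hbdd : BddAbove {t : ℝ | ∃ x : ℕ → ℝ,
        (∀ i ≤ k, ∀ σ ∈ G.simplices i,
            0 ≤ ∑ v ∈ σ, x v ∧ ∑ v ∈ σ, x v ≤ Real.log (m i)) ∧
        t = ∑ v ∈ G.verts, x v} := by
      refine ⟨(n : ℝ) * Real.log (m 0), ?_⟩
      rintro t ⟨y, hy, rfl⟩
      have hyv : ∀ v ∈ G.verts, y v ≤ Real.log (m 0) := by
        intro v hv
        have hσ0 : ({v} : Finset ℕ) ∈ G.simplices 0 :=
          Finset.mem_filter.2 ⟨aux_singleton_mem G hv, by simp⟩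
        have h := (hy 0 (Nat.zero_le k) {v} hσ0).2
        simpa using h
      calc ∑ v ∈ G.verts, y v ≤ ∑ _v ∈ G.verts, Real.log (m 0) := Finset.sum_le_sum hyv
        _ = (n : ℝ) * Real.log (m 0) := by
            rw [Finset.sum_const, nsmul_eq_mul, hndef, hVdef]
    have hmemγ : (∑ v ∈ V, x v) ∈ {t : ℝ | ∃ x : ℕ → ℝ,
        (∀ i ≤ k, ∀ σ ∈ G.simplices i,
            0 ≤ ∑ v ∈ σ, x v ∧ ∑ v ∈ σ, x v ≤ Real.log (m i)) ∧
        t = ∑ v ∈ G.verts, x v} := ⟨x, hfeas, rfl⟩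
    exact le_csSup hbdd hmemγ
  -- conclusion
  have hfinal : Real.log A.card ≤ (n : ℝ) * Real.log n + gammaLP m k G := by linarith
  have hexp : (A.card : ℝ) ≤ (n : ℝ) ^ n * Real.exp (gammaLP m k G) := by
    have h1 := Real.exp_le_exp.2 hfinal
    rw [Real.exp_log hNpos, Real.exp_add, Real.exp_nat_mul,
      Real.exp_log (by exact_mod_cast hn1 : (0:ℝ) < (n:ℝ))] at h1
    exact h1
  rw [hno, hs0]
  exact hexp
end

section
/- Let G be a simplicial complex of dimension k ≥ 1 and let H be a k-dimensional subcomplex of G with s_k(H) > 0. Then there exists a constant C_H ∈ (1,∞) such that for every positive integer m_0 and all integers m_1, m_2 with 0 ≤ m_1 < m_2 ≤ m_0^{k+1}/s_k(G), one has N(m_0, m_1·s_1(G), ..., m_1·s_k(G); H) ≤ C_H · (m_1/m_2)^{1/(k+1)} · N(m_0, m_2·s_1(G), ..., m_2·s_k(G); H). -/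
open scoped BigOperators

-- ## auxiliary lemmas for stmt_3

namespace SComplex

@[ext] lemma ext' {F G : SComplex} (h : F.faces = G.faces) : F = G := by
  cases F; cases G; simpa using h

lemma face_subset_verts (F : SComplex) {t : Finset ℕ} (ht : t ∈ F.faces) : t ⊆ F.verts :=
  Finset.le_sup (f := id) ht

lemma singleton_mem_faces {F : SComplex} {v : ℕ} : {v} ∈ F.faces ↔ v ∈ F.verts := by
  constructor
  · intro h; exact face_subset_verts F h (Finset.mem_singleton_self v)
  · intro h
    rw [verts, Finset.mem_sup] at h
    obtain ⟨s, hs, hv⟩ := h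
    exact F.down_closed s hs {v} (Finset.singleton_subset_iff.2 hv) (by simp)

lemma verts_card (F : SComplex) : F.verts.card = F.s 0 := by
  unfold s simplices
  apply Finset.card_bij (fun v _ => ({v} : Finset ℕ))
  · intro v hv
    exact Finset.mem_filter.2 ⟨singleton_mem_faces.2 hv, rfl⟩
  · intro a ha b hb h; simpa using h
  · intro t ht
    rw [Finset.mem_filter] at ht
    obtain ⟨v, rfl⟩ := Finset.card_eq_one.1 ht.2
    exact ⟨v, singleton_mem_faces.1 ht.1, rfl⟩

lemma verts_subset_of_subcomplex {K F : SComplex} (h : K.IsSubcomplex F) :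
    K.verts ⊆ F.verts := Finset.le_iff_subset.1 (Finset.sup_mono h)

lemma simplices_subset_of_subcomplex {K F : SComplex} (h : K.IsSubcomplex F) (i : ℕ) :
    K.simplices i ⊆ F.simplices i := Finset.filter_subset_filter _ h

lemma iso_s {K H : SComplex} (h : K.Iso H) (i : ℕ) : K.s i = H.s i := by
  obtain ⟨φ, hinj, hfaces⟩ := h
  have hcard : ∀ t ∈ H.faces, (t.image φ).card = t.card := fun t ht =>
    Finset.card_image_of_injOn (hinj.mono (by exact_mod_cast face_subset_verts H ht))
  have himg_inj : Set.InjOn (Finset.image φ) ↑H.faces := by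
    intro t ht t' ht' hEq
    ext a
    constructor
    · intro hat
      have : φ a ∈ t'.image φ := hEq ▸ Finset.mem_image_of_mem φ hat
      obtain ⟨b, hb, hba⟩ := Finset.mem_image.1 this
      have : b = a := hinj (face_subset_verts H ht' hb) (face_subset_verts H ht hat) hba
      exact this ▸ hb
    · intro hat
      have : φ a ∈ t.image φ := hEq ▸ Finset.mem_image_of_mem φ hat
      obtain ⟨b, hb, hba⟩ := Finset.mem_image.1 this
      have : b = a := hinj (face_subset_verts H ht hb) (face_subset_verts H ht' hat) hba
      exact this ▸ hb
  unfold s simplices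
  rw [hfaces]
  rw [Finset.filter_image]
  rw [Finset.card_image_of_injOn (himg_inj.mono (by exact_mod_cast Finset.filter_subset _ H.faces))]
  congr 1
  apply Finset.filter_congr
  intro t ht
  simp only [hcard t ht]

end SComplex

namespace SComplex

-- ## copy finsets

lemma copies_finite (F G : SComplex) : {K : SComplex | K.IsSubcomplex F ∧ K.Iso G}.Finite := by
  apply Set.Finite.of_finite_image (f := faces)
  · apply Set.Finite.subset (Finset.finite_toSet F.faces.powerset)
    rintro x ⟨K, hK, rfl⟩
    have h1 : K.faces ⊆ F.faces := hK.1
    simpa [Finset.mem_powerset] using h1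
  · intro a _ b _ h; exact ext' h

noncomputable def copyFinset (F G : SComplex) : Finset SComplex :=
  (copies_finite F G).toFinset

lemma mem_copyFinset {F G K : SComplex} :
    K ∈ copyFinset F G ↔ K.IsSubcomplex F ∧ K.Iso G := by
  simp [copyFinset]

lemma nCopies_eq_card (F G : SComplex) : nCopies F G = (copyFinset F G).card := by
  rw [nCopies, Set.ncard_eq_toFinset_card _ (copies_finite F G)]; rfl

lemma faces_card_le (F : SComplex) : F.faces.card ≤ 2 ^ F.s 0 := by
  calc F.faces.card ≤ F.verts.powerset.card := by
        apply Finset.card_le_card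
        intro t ht
        exact Finset.mem_powerset.2 (face_subset_verts F ht)
    _ = 2 ^ F.verts.card := Finset.card_powerset _
    _ = 2 ^ F.s 0 := by rw [verts_card]

lemma nCopies_le (F G : SComplex) : nCopies F G ≤ 2 ^ 2 ^ F.s 0 := by
  rw [nCopies_eq_card]
  calc (copyFinset F G).card ≤ F.faces.powerset.card := by
        apply Finset.card_le_card_of_injOn faces
        · intro K hK
          exact Finset.mem_powerset.2 (mem_copyFinset.1 hK).1
        · intro a _ b _ h; exact ext' h
    _ = 2 ^ F.faces.card := Finset.card_powerset _
    _ ≤ 2 ^ 2 ^ F.s 0 := Nat.pow_le_pow_right (by norm_num) (faces_card_le F)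

-- ## Nmax basics

def pointComplex : SComplex where
  faces := {{1}}
  faces_nonempty := ⟨{1}, by simp⟩
  empty_not_mem := fun h => (Finset.singleton_ne_empty 1) (Finset.mem_singleton.1 h).symm
  down_closed := by
    intro s hs t hts htne
    simp only [Finset.mem_singleton] at hs ⊢
    subst hs
    rcases Finset.subset_singleton_iff.1 hts with h | h
    · exact absurd h htne
    · exact h

lemma pointComplex_s0 : pointComplex.s 0 = 1 := by
  have : pointComplex.simplices 0 = {{1}} := by
    apply Finset.filter_true_of_mem
    intro t ht
    simp only [pointComplex, Finset.mem_singleton] at ht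
    simp [ht]
  rw [s, this]; rfl

lemma pointComplex_s (i : ℕ) (hi : 1 ≤ i) : pointComplex.s i = 0 := by
  rw [s, Finset.card_eq_zero]
  apply Finset.filter_false_of_mem
  intro t ht
  simp only [pointComplex, Finset.mem_singleton] at ht
  subst ht
  simp only [Finset.card_singleton]
  omega

lemma nmax_set_nonempty (m : ℕ → ℕ) (k : ℕ) (G : SComplex) (hm : 0 < m 0) :
    {t : ℕ | ∃ F : SComplex, (∀ i ≤ k, F.s i ≤ m i) ∧ t = nCopies F G}.Nonempty := by
  refine ⟨nCopies pointComplex G, pointComplex, fun i hi => ?_, rfl⟩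
  rcases Nat.eq_zero_or_pos i with h | h
  · subst h; rw [pointComplex_s0]; exact hm
  · rw [pointComplex_s i h]; exact Nat.zero_le _

lemma nmax_bddAbove (m : ℕ → ℕ) (k : ℕ) (G : SComplex) :
    BddAbove {t : ℕ | ∃ F : SComplex, (∀ i ≤ k, F.s i ≤ m i) ∧ t = nCopies F G} := by
  refine ⟨2 ^ 2 ^ m 0, ?_⟩
  rintro t ⟨F, hF, rfl⟩
  calc nCopies F G ≤ 2 ^ 2 ^ F.s 0 := nCopies_le F G
    _ ≤ 2 ^ 2 ^ m 0 := Nat.pow_le_pow_right (by norm_num)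
        (Nat.pow_le_pow_right (by norm_num) (hF 0 (Nat.zero_le k)))

lemma le_nmax {m : ℕ → ℕ} {k : ℕ} {G : SComplex} (F : SComplex)
    (hF : ∀ i ≤ k, F.s i ≤ m i) : nCopies F G ≤ Nmax m k G :=
  le_csSup (nmax_bddAbove m k G) ⟨F, hF, rfl⟩

lemma nmax_mono {m m' : ℕ → ℕ} {k : ℕ} {G : SComplex} (h : ∀ i ≤ k, m i ≤ m' i) :
    Nmax m k G ≤ Nmax m' k G := by
  by_cases hne : {t : ℕ | ∃ F : SComplex, (∀ i ≤ k, F.s i ≤ m i) ∧ t = nCopies F G}.Nonempty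
  · apply csSup_le_csSup (nmax_bddAbove m' k G) hne
    rintro t ⟨F, hF, rfl⟩
    exact ⟨F, fun i hi => (hF i hi).trans (h i hi), rfl⟩
  · rw [Set.not_nonempty_iff_eq_empty] at hne
    rw [Nmax, hne, csSup_empty]
    exact Nat.zero_le _

end SComplex

namespace SComplex

instance : DecidableEq SComplex := fun a b =>
  decidable_of_iff (a.faces = b.faces) ⟨ext', fun h => by rw [h]⟩

-- ## mapped complexes

def mapC (e : ℕ → ℕ) (F : SComplex) : SComplex where
  faces := F.faces.image (Finset.image e)
  faces_nonempty := F.faces_nonempty.image _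
  empty_not_mem := by
    intro h
    obtain ⟨t, ht, hte⟩ := Finset.mem_image.1 h
    have htne : t.Nonempty := by
      rcases t.eq_empty_or_nonempty with h' | h'
      · exact absurd (h' ▸ ht) F.empty_not_mem
      · exact h'
    obtain ⟨x, hx⟩ := htne
    exact (Finset.notMem_empty (e x)) (hte ▸ Finset.mem_image_of_mem e hx)
  down_closed := by
    intro s hs t hts htne
    obtain ⟨u, hu, rfl⟩ := Finset.mem_image.1 hs
    have h1 : (u.filter (fun x => e x ∈ t)).Nonempty := by
      obtain ⟨y, hy⟩ := Finset.nonempty_iff_ne_empty.2 htne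
      obtain ⟨x, hx, rfl⟩ := Finset.mem_image.1 (hts hy)
      exact ⟨x, Finset.mem_filter.2 ⟨hx, hy⟩⟩
    refine Finset.mem_image.2 ⟨u.filter (fun x => e x ∈ t),
      F.down_closed u hu _ (Finset.filter_subset _ _)
        (Finset.nonempty_iff_ne_empty.1 h1), ?_⟩
    ext y
    simp only [Finset.mem_image, Finset.mem_filter]
    constructor
    · rintro ⟨x, ⟨_, hxt⟩, rfl⟩; exact hxt
    · intro hy
      obtain ⟨x, hx, rfl⟩ := Finset.mem_image.1 (hts hy)
      exact ⟨x, ⟨hx, hy⟩, rfl⟩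

lemma mapC_faces (e : ℕ → ℕ) (F : SComplex) :
    (mapC e F).faces = F.faces.image (Finset.image e) := rfl

lemma mapC_s {e : ℕ → ℕ} (he : Function.Injective e) (F : SComplex) (i : ℕ) :
    (mapC e F).s i = F.s i := by
  unfold s simplices
  rw [mapC_faces, Finset.filter_image,
    Finset.card_image_of_injective _ (Finset.image_injective he)]
  congr 1
  apply Finset.filter_congr
  intro t _
  rw [Finset.card_image_of_injective _ he]

lemma sup_finset_image (e : ℕ → ℕ) (S : Finset (Finset ℕ)) :
    (S.sup id).image e = S.sup (fun t => t.image e) := by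
  induction S using Finset.induction_on with
  | empty => simp
  | @insert a S ha ih => simp [Finset.sup_insert, Finset.image_union, ih]

lemma mapC_verts (e : ℕ → ℕ) (F : SComplex) :
    (mapC e F).verts = F.verts.image e := by
  rw [verts, mapC_faces, Finset.sup_image, verts, sup_finset_image]
  rfl

lemma mapC_subcomplex (e : ℕ → ℕ) {K F : SComplex} (h : K.IsSubcomplex F) :
    (mapC e K).IsSubcomplex (mapC e F) := Finset.image_subset_image h

lemma mapC_iso {e : ℕ → ℕ} (he : Function.Injective e) {K H : SComplex} (h : K.Iso H) :
    (mapC e K).Iso H := by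
  obtain ⟨φ, hφ, hfaces⟩ := h
  refine ⟨e ∘ φ, ?_, ?_⟩
  · exact (he.injOn).comp hφ (Set.mapsTo_univ _ _)
  · rw [mapC_faces, hfaces, Finset.image_image]
    apply Finset.image_congr
    intro t _
    exact Finset.image_image

lemma mapC_injective {e : ℕ → ℕ} (he : Function.Injective e) :
    Function.Injective (mapC e) := by
  intro F F' h
  apply ext'
  have := congrArg faces h
  rw [mapC_faces, mapC_faces] at this
  exact Finset.image_injective (Finset.image_injective he) this

lemma copyFinset_map_subset {e : ℕ → ℕ} (he : Function.Injective e) (F H : SComplex) :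
    (copyFinset F H).image (mapC e) ⊆ copyFinset (mapC e F) H := by
  intro K hK
  obtain ⟨K', hK', rfl⟩ := Finset.mem_image.1 hK
  rw [mem_copyFinset] at hK' ⊢
  exact ⟨mapC_subcomplex e hK'.1, mapC_iso he hK'.2⟩

lemma nCopies_le_mapC {e : ℕ → ℕ} (he : Function.Injective e) (F H : SComplex) :
    nCopies F H ≤ nCopies (mapC e F) H := by
  rw [nCopies_eq_card, nCopies_eq_card]
  calc (copyFinset F H).card = ((copyFinset F H).image (mapC e)).card :=
        (Finset.card_image_of_injective _ (mapC_injective he)).symm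
    _ ≤ _ := Finset.card_le_card (copyFinset_map_subset he F H)

-- ## unions

def unionC (F F' : SComplex) : SComplex where
  faces := F.faces ∪ F'.faces
  faces_nonempty := Finset.Nonempty.inl F.faces_nonempty
  empty_not_mem := by
    intro h
    rcases Finset.mem_union.1 h with h | h
    · exact F.empty_not_mem h
    · exact F'.empty_not_mem h
  down_closed := by
    intro s hs t hts htne
    rcases Finset.mem_union.1 hs with h | h
    · exact Finset.mem_union.2 (Or.inl (F.down_closed s h t hts htne))
    · exact Finset.mem_union.2 (Or.inr (F'.down_closed s h t hts htne))

lemma unionC_s_le (F F' : SComplex) (i : ℕ) :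
    (unionC F F').s i ≤ F.s i + F'.s i := by
  unfold s simplices
  calc ((F.faces ∪ F'.faces).filter _).card
      = (F.faces.filter (fun s => s.card = i+1) ∪ F'.faces.filter (fun s => s.card = i+1)).card := by
        rw [Finset.filter_union]
    _ ≤ _ := Finset.card_union_le _ _

lemma subcomplex_unionC_left (F F' : SComplex) : F.IsSubcomplex (unionC F F') :=
  Finset.subset_union_left

lemma subcomplex_unionC_right (F F' : SComplex) : F'.IsSubcomplex (unionC F F') :=
  Finset.subset_union_right

lemma unionC_verts (F F' : SComplex) : (unionC F F').verts = F.verts ∪ F'.verts :=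
  Finset.sup_union

lemma copyFinset_mono {F F' : SComplex} (h : F.IsSubcomplex F') (H : SComplex) :
    copyFinset F H ⊆ copyFinset F' H := by
  intro K hK
  rw [mem_copyFinset] at hK ⊢
  exact ⟨Finset.Subset.trans hK.1 h, hK.2⟩

end SComplex

namespace SComplex

-- ## relabeling into an initial segment

lemma exists_relabel (F : SComplex) {m₀ : ℕ} (h : F.s 0 ≤ m₀) :
    ∃ e : ℕ → ℕ, Function.Injective e ∧ (mapC e F).verts ⊆ Finset.Icc 1 m₀ := by
  classical
  have hcard : F.verts.card ≤ m₀ := by rw [verts_card]; exact h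
  refine ⟨fun x => if hx : x ∈ F.verts
      then ((F.verts.equivFin ⟨x, hx⟩ : Fin F.verts.card) : ℕ) + 1 else x + m₀ + 1, ?_, ?_⟩
  · intro a b hab
    simp only [] at hab
    by_cases ha : a ∈ F.verts <;> by_cases hb : b ∈ F.verts
    · rw [dif_pos ha, dif_pos hb] at hab
      have h1 : F.verts.equivFin ⟨a, ha⟩ = F.verts.equivFin ⟨b, hb⟩ := Fin.ext (by omega)
      simpa using F.verts.equivFin.injective h1
    · rw [dif_pos ha, dif_neg hb] at hab
      have hlt := Fin.is_lt (F.verts.equivFin ⟨a, ha⟩); omega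
    · rw [dif_neg ha, dif_pos hb] at hab
      have hlt := Fin.is_lt (F.verts.equivFin ⟨b, hb⟩); omega
    · rw [dif_neg ha, dif_neg hb] at hab; omega
  · rw [mapC_verts]
    intro y hy
    obtain ⟨x, hx, rfl⟩ := Finset.mem_image.1 hy
    have hlt : ((F.verts.equivFin ⟨x, hx⟩ : Fin F.verts.card) : ℕ) < F.verts.card :=
      Fin.is_lt _
    simp only [dif_pos hx, Finset.mem_Icc]
    omega

-- ## permutations of a finite vertex set

def permExt (W : Finset ℕ) (g : Equiv.Perm {x // x ∈ W}) : ℕ → ℕ :=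
  fun x => if hx : x ∈ W then (g ⟨x, hx⟩ : {x // x ∈ W}).val else x

lemma permExt_mem {W : Finset ℕ} (g : Equiv.Perm {x // x ∈ W}) {x : ℕ} (hx : x ∈ W) :
    permExt W g x ∈ W := by
  rw [permExt, dif_pos hx]; exact (g ⟨x, hx⟩).2

lemma permExt_injective (W : Finset ℕ) (g : Equiv.Perm {x // x ∈ W}) :
    Function.Injective (permExt W g) := by
  intro a b hab
  unfold permExt at hab
  by_cases ha : a ∈ W <;> by_cases hb : b ∈ W
  · rw [dif_pos ha, dif_pos hb] at hab
    have := g.injective (Subtype.ext hab)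
    simpa using this
  · rw [dif_pos ha, dif_neg hb] at hab
    exact absurd (hab ▸ (g ⟨a, ha⟩).2) hb
  · rw [dif_neg ha, dif_pos hb] at hab
    exact absurd (hab ▸ (g ⟨b, hb⟩).2) ha
  · rwa [dif_neg ha, dif_neg hb] at hab

lemma permExt_image_subset {W A : Finset ℕ} (hA : A ⊆ W) (g : Equiv.Perm {x // x ∈ W}) :
    A.image (permExt W g) ⊆ W := by
  intro y hy
  obtain ⟨x, hx, rfl⟩ := Finset.mem_image.1 hy
  exact permExt_mem g (hA hx)

-- ## counting permutations mapping A onto B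

def permEmbPair (W A B : Finset ℕ) (g : Equiv.Perm {x // x ∈ W})
    (hg : A.image (permExt W g) = B) :
    ({x // x ∈ A} ↪ {x // x ∈ B}) × ({x // x ∈ W \ A} ↪ {x // x ∈ W \ B}) :=
  (⟨fun a => ⟨permExt W g a.1, hg ▸ Finset.mem_image_of_mem _ a.2⟩,
    fun a b hab => Subtype.ext (permExt_injective W g (congrArg Subtype.val hab))⟩,
   ⟨fun x => ⟨permExt W g x.1, by
      rw [Finset.mem_sdiff]
      refine ⟨permExt_mem g (Finset.mem_sdiff.1 x.2).1, ?_⟩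
      intro hmem
      rw [← hg] at hmem
      obtain ⟨a, ha, haeq⟩ := Finset.mem_image.1 hmem
      exact (Finset.mem_sdiff.1 x.2).2 (permExt_injective W g haeq ▸ ha)⟩,
    fun a b hab => Subtype.ext (permExt_injective W g (congrArg Subtype.val hab))⟩)

lemma permEmbPair_fst (W A B : Finset ℕ) (g : Equiv.Perm {x // x ∈ W})
    (hg : A.image (permExt W g) = B) (a : {x // x ∈ A}) :
    ((permEmbPair W A B g hg).1 a).val = permExt W g a.1 := rfl

lemma permEmbPair_snd (W A B : Finset ℕ) (g : Equiv.Perm {x // x ∈ W})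
    (hg : A.image (permExt W g) = B) (a : {x // x ∈ W \ A}) :
    ((permEmbPair W A B g hg).2 a).val = permExt W g a.1 := rfl

lemma count_perm_image (W : Finset ℕ) {A B : Finset ℕ} (hA : A ⊆ W) :
    (Finset.univ.filter
        (fun g : Equiv.Perm {x // x ∈ W} => A.image (permExt W g) = B)).card
      ≤ A.card.factorial * (W.card - A.card).factorial := by
  classical
  rcases (Finset.univ.filter
      (fun g : Equiv.Perm {x // x ∈ W} => A.image (permExt W g) = B)).eq_empty_or_nonempty
    with hemp | ⟨g₀, hg₀⟩
  · rw [hemp]; exact Nat.zero_le _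
  have hg₀' : A.image (permExt W g₀) = B := (Finset.mem_filter.1 hg₀).2
  have hB : B ⊆ W := hg₀' ▸ permExt_image_subset hA g₀
  have hBcard : B.card = A.card := by
    rw [← hg₀', Finset.card_image_of_injective _ (permExt_injective W g₀)]
  calc (Finset.univ.filter
        (fun g : Equiv.Perm {x // x ∈ W} => A.image (permExt W g) = B)).card
      ≤ Fintype.card (({x // x ∈ A} ↪ {x // x ∈ B}) ×
          ({x // x ∈ W \ A} ↪ {x // x ∈ W \ B})) := by
        rw [← Finset.card_univ]
        apply Finset.card_le_card_of_injOn
          (fun g => if hg : A.image (permExt W g) = B then permEmbPair W A B g hg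
            else permEmbPair W A B g₀ hg₀')
        · intro g _; exact Finset.mem_univ _
        · intro g hg g' hg' heq
          have hgm : A.image (permExt W g) = B := (Finset.mem_filter.1 hg).2
          have hgm' : A.image (permExt W g') = B := (Finset.mem_filter.1 hg').2
          simp only [dif_pos hgm, dif_pos hgm'] at heq
          apply Equiv.ext
          intro x
          apply Subtype.ext
          have hvx : ∀ (hx : x.1 ∈ W), permExt W g x.1 = (g x).val := by
            intro hx
            unfold permExt
            rw [dif_pos hx]
          have hvx' : ∀ (hx : x.1 ∈ W), permExt W g' x.1 = (g' x).val := by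
            intro hx
            unfold permExt
            rw [dif_pos hx]
          by_cases hx : x.1 ∈ A
          · have hv0 := congrArg Subtype.val (DFunLike.congr_fun (congrArg Prod.fst heq) ⟨x.1, hx⟩)
            rw [permEmbPair_fst, permEmbPair_fst] at hv0
            rw [← hvx x.2, ← hvx' x.2]
            exact hv0
          · have hx' : x.1 ∈ W \ A := Finset.mem_sdiff.2 ⟨x.2, hx⟩
            have hv0 := congrArg Subtype.val (DFunLike.congr_fun (congrArg Prod.snd heq) ⟨x.1, hx'⟩)
            rw [permEmbPair_snd, permEmbPair_snd] at hv0
            rw [← hvx x.2, ← hvx' x.2]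
            exact hv0
    _ = A.card.factorial * (W.card - A.card).factorial := by
        rw [Fintype.card_prod, Fintype.card_embedding_eq, Fintype.card_embedding_eq]
        simp only [Fintype.card_coe]
        rw [hBcard, Nat.descFactorial_self,
          Finset.card_sdiff_of_subset hA, Finset.card_sdiff_of_subset hB, hBcard, Nat.descFactorial_self]

end SComplex

namespace SComplex

lemma count_perm_image_mem (W : Finset ℕ) {A : Finset ℕ} (hA : A ⊆ W)
    (VS : Finset (Finset ℕ)) :
    (Finset.univ.filter
        (fun g : Equiv.Perm {x // x ∈ W} => A.image (permExt W g) ∈ VS)).card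
      ≤ VS.card * (A.card.factorial * (W.card - A.card).factorial) := by
  classical
  have hsub : Finset.univ.filter
        (fun g : Equiv.Perm {x // x ∈ W} => A.image (permExt W g) ∈ VS)
      ⊆ VS.biUnion (fun B => Finset.univ.filter
        (fun g : Equiv.Perm {x // x ∈ W} => A.image (permExt W g) = B)) := by
    intro g hg
    rw [Finset.mem_filter] at hg
    exact Finset.mem_biUnion.2 ⟨_, hg.2, Finset.mem_filter.2 ⟨Finset.mem_univ _, rfl⟩⟩
  calc _ ≤ (VS.biUnion (fun B => Finset.univ.filter
        (fun g : Equiv.Perm {x // x ∈ W} => A.image (permExt W g) = B))).card :=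
        Finset.card_le_card hsub
    _ ≤ ∑ B ∈ VS, (Finset.univ.filter
        (fun g : Equiv.Perm {x // x ∈ W} => A.image (permExt W g) = B)).card :=
        Finset.card_biUnion_le
    _ ≤ ∑ _B ∈ VS, (A.card.factorial * (W.card - A.card).factorial) :=
        Finset.sum_le_sum (fun B _ => count_perm_image W hA)
    _ = _ := by rw [Finset.sum_const, smul_eq_mul]

-- facts about copies

lemma copy_verts_card {F' H K : SComplex} (hK : K ∈ copyFinset F' H) :
    K.verts.card = H.s 0 := by
  rw [verts_card, iso_s (mem_copyFinset.1 hK).2]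

lemma copy_verts_subset {F' H K : SComplex} (hK : K ∈ copyFinset F' H) :
    K.verts ⊆ F'.verts :=
  verts_subset_of_subcomplex (mem_copyFinset.1 hK).1

lemma copy_exists_ksimplex {F' H K : SComplex} (hK : K ∈ copyFinset F' H) {k : ℕ}
    (hHk : 0 < H.s k) :
    ∃ σ ∈ F'.simplices k, σ ⊆ K.verts ∧ σ.card = k + 1 := by
  have : 0 < K.s k := by rw [iso_s (mem_copyFinset.1 hK).2]; exact hHk
  obtain ⟨σ, hσ⟩ := Finset.card_pos.1 this
  have hσ2 := Finset.mem_filter.1 hσ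
  exact ⟨σ, simplices_subset_of_subcomplex (mem_copyFinset.1 hK).1 k hσ,
    face_subset_verts K hσ2.1, hσ2.2⟩

lemma vertSets_card_le (F' H : SComplex) (W : Finset ℕ) (hv : F'.verts ⊆ W) {k : ℕ}
    (hHk : 0 < H.s k) :
    ((copyFinset F' H).image verts).card
      ≤ F'.s k * (W.powersetCard (H.s 0 - (k+1))).card := by
  classical
  have hsub : (copyFinset F' H).image verts ⊆
      (F'.simplices k).biUnion (fun σ =>
        (W.powersetCard (H.s 0 - (k+1))).image (fun S => σ ∪ S)) := by
    intro B hB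
    obtain ⟨K, hK, rfl⟩ := Finset.mem_image.1 hB
    obtain ⟨σ, hσF, hσK, hσcard⟩ := copy_exists_ksimplex hK hHk
    refine Finset.mem_biUnion.2 ⟨σ, hσF, Finset.mem_image.2 ⟨K.verts \ σ, ?_, ?_⟩⟩
    · rw [Finset.mem_powersetCard]
      constructor
      · exact Finset.Subset.trans (Finset.sdiff_subset) ((copy_verts_subset hK).trans hv)
      · rw [Finset.card_sdiff_of_subset hσK, copy_verts_card hK, hσcard]
    · rw [Finset.union_sdiff_of_subset hσK]
  calc ((copyFinset F' H).image verts).card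
      ≤ ((F'.simplices k).biUnion (fun σ =>
        (W.powersetCard (H.s 0 - (k+1))).image (fun S => σ ∪ S))).card :=
        Finset.card_le_card hsub
    _ ≤ ∑ σ ∈ F'.simplices k, ((W.powersetCard (H.s 0 - (k+1))).image (fun S => σ ∪ S)).card :=
        Finset.card_biUnion_le
    _ ≤ ∑ _σ ∈ F'.simplices k, (W.powersetCard (H.s 0 - (k+1))).card :=
        Finset.sum_le_sum (fun σ _ => Finset.card_image_le)
    _ = _ := by rw [Finset.sum_const, smul_eq_mul]; rfl

-- the greedy step

lemma greedy_step (W : Finset ℕ) (F₁ F' H : SComplex) {k : ℕ} (hHk : 0 < H.s k)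
    (h1 : F₁.verts ⊆ W) (h2 : F'.verts ⊆ W)
    (hbound : 2 * (F'.s k * (W.powersetCard (H.s 0 - (k+1))).card) *
        ((H.s 0).factorial * (W.card - H.s 0).factorial) ≤ W.card.factorial) :
    ∃ F'' : SComplex, F''.verts ⊆ W ∧ (∀ i, F''.s i ≤ F'.s i + F₁.s i) ∧
      2 * nCopies F' H + nCopies F₁ H ≤ 2 * nCopies F'' H := by
  classical
  set C₁ := copyFinset F₁ H with hC₁
  set D := copyFinset F' H with hD
  set VS := D.image verts with hVS
  set n := W.card with hn
  set h := H.s 0 with hh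
  -- averaging: find a good permutation
  have havg : ∃ g : Equiv.Perm {x // x ∈ W},
      2 * (C₁.filter (fun K => mapC (permExt W g) K ∈ D)).card ≤ C₁.card := by
    obtain ⟨g₀, -, hmin⟩ := Finset.exists_min_image Finset.univ
      (fun g : Equiv.Perm {x // x ∈ W} =>
        (C₁.filter (fun K => mapC (permExt W g) K ∈ D)).card) ⟨1, Finset.mem_univ 1⟩
    refine ⟨g₀, ?_⟩
    have hcardP : Fintype.card (Equiv.Perm {x // x ∈ W}) = n.factorial := by
      rw [Fintype.card_perm, Fintype.card_coe]
    have hsum1 : n.factorial * (C₁.filter (fun K => mapC (permExt W g₀) K ∈ D)).card ≤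
        ∑ g : Equiv.Perm {x // x ∈ W},
          (C₁.filter (fun K => mapC (permExt W g) K ∈ D)).card := by
      rw [← hcardP, ← Finset.card_univ, ← smul_eq_mul, ← Finset.sum_const]
      exact Finset.sum_le_sum (fun g _ => hmin g (Finset.mem_univ g))
    have hsum2 : ∑ g : Equiv.Perm {x // x ∈ W},
          (C₁.filter (fun K => mapC (permExt W g) K ∈ D)).card ≤
        C₁.card * (VS.card * (h.factorial * (n - h).factorial)) := by
      have hswap : ∑ g : Equiv.Perm {x // x ∈ W},
          (C₁.filter (fun K => mapC (permExt W g) K ∈ D)).card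
          = ∑ K ∈ C₁, (Finset.univ.filter
              (fun g : Equiv.Perm {x // x ∈ W} => mapC (permExt W g) K ∈ D)).card := by
        simp only [Finset.card_filter]
        rw [Finset.sum_comm]
      rw [hswap]
      have hper : ∀ K ∈ C₁, (Finset.univ.filter
          (fun g : Equiv.Perm {x // x ∈ W} => mapC (permExt W g) K ∈ D)).card
          ≤ VS.card * (h.factorial * (n - h).factorial) := by
        intro K hK
        have hKW : K.verts ⊆ W := (copy_verts_subset hK).trans h1
        have hKc : K.verts.card = h := copy_verts_card hK
        calc (Finset.univ.filter
            (fun g : Equiv.Perm {x // x ∈ W} => mapC (permExt W g) K ∈ D)).card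
            ≤ (Finset.univ.filter
            (fun g : Equiv.Perm {x // x ∈ W} => K.verts.image (permExt W g) ∈ VS)).card := by
              apply Finset.card_le_card
              intro g hg
              rw [Finset.mem_filter] at hg ⊢
              refine ⟨Finset.mem_univ _, ?_⟩
              rw [← mapC_verts]
              exact Finset.mem_image_of_mem verts hg.2
          _ ≤ VS.card * (K.verts.card.factorial * (W.card - K.verts.card).factorial) :=
              count_perm_image_mem W hKW VS
          _ = VS.card * (h.factorial * (n - h).factorial) := by rw [hKc]
      calc ∑ K ∈ C₁, (Finset.univ.filter
              (fun g : Equiv.Perm {x // x ∈ W} => mapC (permExt W g) K ∈ D)).card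
          ≤ ∑ _K ∈ C₁, VS.card * (h.factorial * (n - h).factorial) :=
            Finset.sum_le_sum hper
        _ = _ := by rw [Finset.sum_const, smul_eq_mul]
    have hVS : VS.card ≤ F'.s k * (W.powersetCard (h - (k+1))).card :=
      vertSets_card_le F' H W h2 hHk
    have hfin : 2 * (C₁.card * (VS.card * (h.factorial * (n - h).factorial)))
        ≤ C₁.card * n.factorial := by
      calc 2 * (C₁.card * (VS.card * (h.factorial * (n - h).factorial)))
          = C₁.card * (2 * VS.card * (h.factorial * (n - h).factorial)) := by ring
        _ ≤ C₁.card * (2 * (F'.s k * (W.powersetCard (h - (k+1))).card) *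
              (h.factorial * (n - h).factorial)) := by
            apply Nat.mul_le_mul_left
            apply Nat.mul_le_mul_right
            exact Nat.mul_le_mul_left 2 hVS
        _ ≤ C₁.card * n.factorial := Nat.mul_le_mul_left _ hbound
    have hpos : 0 < n.factorial := Nat.factorial_pos n
    have hfinal : n.factorial * (2 * (C₁.filter
        (fun K => mapC (permExt W g₀) K ∈ D)).card) ≤ n.factorial * C₁.card := by
      calc n.factorial * (2 * (C₁.filter (fun K => mapC (permExt W g₀) K ∈ D)).card)
          = 2 * (n.factorial * (C₁.filter (fun K => mapC (permExt W g₀) K ∈ D)).card) := by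
            ring
        _ ≤ 2 * (C₁.card * (VS.card * (h.factorial * (n - h).factorial))) :=
            Nat.mul_le_mul_left 2 (hsum1.trans hsum2)
        _ ≤ C₁.card * n.factorial := hfin
        _ = n.factorial * C₁.card := by ring
    exact Nat.le_of_mul_le_mul_left hfinal hpos
  obtain ⟨g, hg⟩ := havg
  set e := permExt W g with he
  refine ⟨unionC F' (mapC e F₁), ?_, ?_, ?_⟩
  · rw [unionC_verts]
    apply Finset.union_subset h2
    rw [mapC_verts]
    exact Finset.Subset.trans (Finset.image_subset_image h1) (by
      intro y hy
      obtain ⟨x, hx, rfl⟩ := Finset.mem_image.1 hy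
      exact permExt_mem g hx)
  · intro i
    calc (unionC F' (mapC e F₁)).s i ≤ F'.s i + (mapC e F₁).s i := unionC_s_le _ _ i
      _ = F'.s i + F₁.s i := by rw [mapC_s (permExt_injective W g)]
  · -- copy counting
    have hinj : Function.Injective (mapC e) := mapC_injective (permExt_injective W g)
    have himg : C₁.image (mapC e) ⊆ copyFinset (unionC F' (mapC e F₁)) H := by
      intro K hK
      obtain ⟨K', hK', rfl⟩ := Finset.mem_image.1 hK
      rw [mem_copyFinset] at hK' ⊢
      exact ⟨Finset.Subset.trans (mapC_subcomplex e hK'.1)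
        (subcomplex_unionC_right F' (mapC e F₁)), mapC_iso (permExt_injective W g) hK'.2⟩
    have hDsub : D ⊆ copyFinset (unionC F' (mapC e F₁)) H :=
      copyFinset_mono (subcomplex_unionC_left F' (mapC e F₁)) H
    have hcap : (C₁.image (mapC e)) ∩ D = (C₁.filter (fun K => mapC e K ∈ D)).image (mapC e) := by
      ext K
      simp only [Finset.mem_inter, Finset.mem_image, Finset.mem_filter]
      constructor
      · rintro ⟨⟨K', hK', rfl⟩, hKD⟩
        exact ⟨K', ⟨hK', hKD⟩, rfl⟩
      · rintro ⟨K', ⟨hK', hKD⟩, rfl⟩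
        exact ⟨⟨K', hK', rfl⟩, hKD⟩
    have hcard1 : ((C₁.image (mapC e)) \ D).card + ((C₁.image (mapC e)) ∩ D).card
        = C₁.card := by
      rw [Finset.card_sdiff_add_card_inter, Finset.card_image_of_injective _ hinj]
    have hcard2 : ((C₁.image (mapC e)) ∩ D).card =
        (C₁.filter (fun K => mapC e K ∈ D)).card := by
      rw [hcap, Finset.card_image_of_injective _ hinj]
    have hunion : D ∪ (C₁.image (mapC e)) ⊆ copyFinset (unionC F' (mapC e F₁)) H :=
      Finset.union_subset hDsub himg
    have hcard3 : D.card + ((C₁.image (mapC e)) \ D).card ≤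
        nCopies (unionC F' (mapC e F₁)) H := by
      rw [nCopies_eq_card]
      calc D.card + ((C₁.image (mapC e)) \ D).card
          = (D ∪ ((C₁.image (mapC e)) \ D)).card :=
            (Finset.card_union_of_disjoint Finset.disjoint_sdiff).symm
        _ = (D ∪ (C₁.image (mapC e))).card := by rw [Finset.union_sdiff_self_eq_union]
        _ ≤ _ := Finset.card_le_card hunion
    rw [nCopies_eq_card F' H, nCopies_eq_card F₁ H, ← hD, ← hC₁]
    omega


end SComplex

namespace SComplex

-- ## binomial estimates

lemma choose_step {n r hh : ℕ} (hr : r + 1 ≤ hh) (hn : 2 * hh ≤ n) :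
    n.choose r * n ≤ 2 * (r + 1) * n.choose (r + 1) := by
  have hid : n.choose (r + 1) * (r + 1) = n.choose r * (n - r) :=
    Nat.choose_succ_right_eq n r
  have h2 : n ≤ 2 * (n - r) := by omega
  calc n.choose r * n ≤ n.choose r * (2 * (n - r)) := Nat.mul_le_mul_left _ h2
    _ = 2 * (n.choose r * (n - r)) := by ring
    _ = 2 * (n.choose (r + 1) * (r + 1)) := by rw [hid]
    _ = 2 * (r + 1) * n.choose (r + 1) := by ring

lemma choose_pow {n hh : ℕ} (hn : 2 * hh ≤ n) :
    ∀ d r, r + d = hh → n.choose r * n ^ d ≤ (2 * hh) ^ d * n.choose hh := by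
  intro d
  induction d with
  | zero =>
    intro r hr
    have : r = hh := by omega
    subst this
    simp
  | succ d ih =>
    intro r hr
    have hr1 : r + 1 ≤ hh := by omega
    calc n.choose r * n ^ (d + 1) = (n.choose r * n) * n ^ d := by ring
      _ ≤ (2 * (r + 1) * n.choose (r + 1)) * n ^ d :=
          Nat.mul_le_mul_right _ (choose_step hr1 hn)
      _ ≤ (2 * hh * n.choose (r + 1)) * n ^ d := by
          apply Nat.mul_le_mul_right
          apply Nat.mul_le_mul_right
          omega
      _ = (2 * hh) * (n.choose (r + 1) * n ^ d) := by ring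
      _ ≤ (2 * hh) * ((2 * hh) ^ d * n.choose hh) :=
          Nat.mul_le_mul_left _ (ih (r + 1) (by omega))
      _ = (2 * hh) ^ (d + 1) * n.choose hh := by ring

-- ## iterated greedy construction

lemma greedy_iter (W : Finset ℕ) (F₁ H : SComplex) {k : ℕ} (hHk : 0 < H.s k)
    (h1 : F₁.verts ⊆ W) :
    ∀ t, 1 ≤ t →
    (∀ j, 1 ≤ j → j < t →
      2 * ((j * F₁.s k) * (W.powersetCard (H.s 0 - (k + 1))).card) *
        ((H.s 0).factorial * (W.card - H.s 0).factorial) ≤ W.card.factorial) →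
    ∃ F' : SComplex, F'.verts ⊆ W ∧ (∀ i, F'.s i ≤ t * F₁.s i) ∧
      t * nCopies F₁ H ≤ 2 * nCopies F' H := by
  intro t
  induction t with
  | zero => intro ht; omega
  | succ t ih =>
    intro _ hbound
    rcases Nat.eq_zero_or_pos t with ht0 | ht1
    · subst ht0
      exact ⟨F₁, h1, fun i => by omega, by omega⟩
    · obtain ⟨F', hFv, hFs, hFc⟩ := ih ht1 (fun j hj hjt => hbound j hj (by omega))
      have hstep : 2 * (F'.s k * (W.powersetCard (H.s 0 - (k + 1))).card) *
          ((H.s 0).factorial * (W.card - H.s 0).factorial) ≤ W.card.factorial := by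
        refine le_trans ?_ (hbound t ht1 (by omega))
        apply Nat.mul_le_mul_right
        apply Nat.mul_le_mul_left
        exact Nat.mul_le_mul_right _ (hFs k)
      obtain ⟨F'', hv'', hs'', hc''⟩ := greedy_step W F₁ F' H hHk h1 hFv hstep
      refine ⟨F'', hv'', fun i => ?_, ?_⟩
      · have := hs'' i
        have := hFs i
        have : (t + 1) * F₁.s i = t * F₁.s i + F₁.s i := by ring
        omega
      · have : (t + 1) * nCopies F₁ H = t * nCopies F₁ H + nCopies F₁ H := by ring
        omega

end SComplex

namespace SComplex

lemma nCopies_eq_zero_of_sk {F H : SComplex} {k : ℕ} (hHk : 0 < H.s k) (hF : F.s k = 0) :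
    nCopies F H = 0 := by
  rw [nCopies_eq_card, Finset.card_eq_zero, Finset.eq_empty_iff_forall_notMem]
  intro K hK
  have h1 : 0 < K.s k := by rw [iso_s (mem_copyFinset.1 hK).2]; exact hHk
  have h2 : K.s k ≤ F.s k :=
    Finset.card_le_card (simplices_subset_of_subcomplex (mem_copyFinset.1 hK).1 k)
  omega

lemma nmax_zero_budget {k : ℕ} (hk : 1 ≤ k) (G H : SComplex) (hHk : 0 < H.s k) {m₀ : ℕ}
    (hm₀ : 0 < m₀) :
    Nmax (fun i => if i = 0 then m₀ else 0 * G.s i) k H = 0 := by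
  apply Nat.eq_zero_of_le_zero
  apply csSup_le (nmax_set_nonempty _ k H (by simpa using hm₀))
  rintro t ⟨F, hF, rfl⟩
  have hFk : F.s k ≤ 0 := by
    have := hF k le_rfl
    rwa [if_neg (by omega : ¬ k = 0), Nat.zero_mul] at this
  rw [nCopies_eq_zero_of_sk hHk (by omega)]

lemma h_ge {H : SComplex} {k : ℕ} (hHk : 0 < H.s k) : k + 1 ≤ H.s 0 := by
  obtain ⟨σ, hσ⟩ := Finset.card_pos.1 hHk
  have h2 := Finset.mem_filter.1 hσ
  calc k + 1 = σ.card := h2.2.symm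
    _ ≤ H.verts.card := Finset.card_le_card (face_subset_verts H h2.1)
    _ = H.s 0 := verts_card H

lemma nmax_boost {k : ℕ} (hk : 1 ≤ k) (G H : SComplex) (hHk : 0 < H.s k)
    {m₀ m₁ m₂ t : ℕ} (hm₀ : 0 < m₀)
    (ht1 : 2 * (2 * H.s 0) ^ (k + 1) ≤ t)
    (htm : t ^ (k + 1) * m₁ ≤ m₂)
    (hcap : m₂ * G.s k ≤ m₀ ^ (k + 1))
    (hm₁ : 1 ≤ m₁) (hGk : 0 < G.s k) :
    t * Nmax (fun i => if i = 0 then m₀ else m₁ * G.s i) k H ≤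
      2 * Nmax (fun i => if i = 0 then m₀ else m₂ * G.s i) k H := by
  classical
  have hmem := Nat.sSup_mem (nmax_set_nonempty
      (fun i => if i = 0 then m₀ else m₁ * G.s i) k H (by simpa using hm₀))
    (nmax_bddAbove (fun i => if i = 0 then m₀ else m₁ * G.s i) k H)
  obtain ⟨F, hFfeas, hFN⟩ := hmem
  have hF0 : F.s 0 ≤ m₀ := by
    have := hFfeas 0 (Nat.zero_le k); simpa using this
  obtain ⟨e, he, hev⟩ := exists_relabel F hF0
  set W := Finset.Icc 1 m₀ with hW
  set F₁ := mapC e F with hF₁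
  have hWcard : W.card = m₀ := by rw [hW, Nat.card_Icc]; omega
  have hF₁s : ∀ i, F₁.s i = F.s i := fun i => mapC_s he F i
  have hk1 : k + 1 ≤ H.s 0 := h_ge hHk
  have ht0 : 1 ≤ t := by
    have h1 : 0 < 2 * (2 * H.s 0) ^ (k + 1) :=
      Nat.mul_pos (by norm_num) (pow_pos (by omega : 0 < 2 * H.s 0) (k + 1))
    omega
  have htk : t ^ (k + 1) ≤ m₀ ^ (k + 1) := by
    calc t ^ (k + 1) = t ^ (k + 1) * 1 := by ring
      _ ≤ t ^ (k + 1) * (m₁ * G.s k) := by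
          apply Nat.mul_le_mul_left
          exact Nat.one_le_iff_ne_zero.2 (Nat.mul_pos hm₁ hGk).ne'
      _ = (t ^ (k + 1) * m₁) * G.s k := by ring
      _ ≤ m₂ * G.s k := Nat.mul_le_mul_right _ htm
      _ ≤ m₀ ^ (k + 1) := hcap
  have htm₀ : t ≤ m₀ := by
    by_contra hcon
    push_neg at hcon
    exact absurd htk (not_le.2 (Nat.pow_lt_pow_left hcon (by omega)))
  have h2h : 2 * H.s 0 ≤ m₀ := by
    have h2ht : 2 * H.s 0 ≤ t := by
      have hle : 2 * H.s 0 ≤ (2 * H.s 0) ^ (k + 1) := Nat.le_self_pow (by omega) _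
      omega
    omega
  have hhm₀ : H.s 0 ≤ m₀ := by omega
  have hbound : ∀ j, 1 ≤ j → j < t →
      2 * ((j * F₁.s k) * (W.powersetCard (H.s 0 - (k + 1))).card) *
        ((H.s 0).factorial * (W.card - H.s 0).factorial) ≤ W.card.factorial := by
    intro j hj hjt
    have hpc : (W.powersetCard (H.s 0 - (k + 1))).card = m₀.choose (H.s 0 - (k + 1)) := by
      rw [Finset.card_powersetCard, hWcard]
    rw [hWcard, hpc]
    have hFk : F₁.s k ≤ m₁ * G.s k := by
      rw [hF₁s]
      have := hFfeas k le_rfl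
      simp only [if_neg (show ¬ k = 0 by omega)] at this
      exact this
    have hjb : 2 * j * (2 * H.s 0) ^ (k + 1) ≤ t ^ (k + 1) := by
      calc 2 * j * (2 * H.s 0) ^ (k + 1) ≤ 2 * t * (2 * H.s 0) ^ (k + 1) := by
            apply Nat.mul_le_mul_right
            apply Nat.mul_le_mul_left
            omega
        _ = t * (2 * (2 * H.s 0) ^ (k + 1)) := by ring
        _ ≤ t * t ^ k := by
            apply Nat.mul_le_mul_left
            calc 2 * (2 * H.s 0) ^ (k + 1) ≤ t := ht1
              _ ≤ t ^ k := Nat.le_self_pow (by omega) t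
        _ = t ^ (k + 1) := by ring
    have hcp := choose_pow (n := m₀) (hh := H.s 0) h2h (k + 1) (H.s 0 - (k + 1)) (by omega)
    have hkey : 2 * ((j * F₁.s k) * m₀.choose (H.s 0 - (k + 1))) ≤ m₀.choose (H.s 0) := by
      have hmul : (2 * ((j * F₁.s k) * m₀.choose (H.s 0 - (k + 1)))) * m₀ ^ (k + 1)
          ≤ m₀.choose (H.s 0) * m₀ ^ (k + 1) := by
        calc (2 * ((j * F₁.s k) * m₀.choose (H.s 0 - (k + 1)))) * m₀ ^ (k + 1)
            = (2 * j * F₁.s k) * (m₀.choose (H.s 0 - (k + 1)) * m₀ ^ (k + 1)) := by ring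
          _ ≤ (2 * j * F₁.s k) * ((2 * H.s 0) ^ (k + 1) * m₀.choose (H.s 0)) :=
              Nat.mul_le_mul_left _ hcp
          _ = (2 * j * (2 * H.s 0) ^ (k + 1)) * F₁.s k * m₀.choose (H.s 0) := by ring
          _ ≤ t ^ (k + 1) * F₁.s k * m₀.choose (H.s 0) := by
              apply Nat.mul_le_mul_right
              exact Nat.mul_le_mul_right _ hjb
          _ ≤ t ^ (k + 1) * (m₁ * G.s k) * m₀.choose (H.s 0) := by
              apply Nat.mul_le_mul_right
              exact Nat.mul_le_mul_left _ hFk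
          _ = ((t ^ (k + 1) * m₁) * G.s k) * m₀.choose (H.s 0) := by ring
          _ ≤ (m₂ * G.s k) * m₀.choose (H.s 0) := by
              apply Nat.mul_le_mul_right
              exact Nat.mul_le_mul_right _ htm
          _ ≤ m₀ ^ (k + 1) * m₀.choose (H.s 0) := Nat.mul_le_mul_right _ hcap
          _ = m₀.choose (H.s 0) * m₀ ^ (k + 1) := by ring
      exact Nat.le_of_mul_le_mul_right hmul (by positivity)
    calc 2 * ((j * F₁.s k) * m₀.choose (H.s 0 - (k + 1))) *
          ((H.s 0).factorial * (m₀ - H.s 0).factorial)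
        ≤ m₀.choose (H.s 0) * ((H.s 0).factorial * (m₀ - H.s 0).factorial) :=
          Nat.mul_le_mul_right _ hkey
      _ = m₀.factorial := by
          rw [← mul_assoc]
          exact Nat.choose_mul_factorial_mul_factorial hhm₀
  obtain ⟨F', hFv, hFs, hFc⟩ := greedy_iter W F₁ H hHk hev t ht0 hbound
  have hfeas2 : ∀ i ≤ k, F'.s i ≤ (fun i => if i = 0 then m₀ else m₂ * G.s i) i := by
    intro i hi
    by_cases hi0 : i = 0
    · subst hi0
      simp only [if_pos rfl]
      rw [← verts_card]
      calc F'.verts.card ≤ W.card := Finset.card_le_card hFv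
        _ = m₀ := hWcard
    · simp only [if_neg hi0]
      calc F'.s i ≤ t * F₁.s i := hFs i
        _ ≤ t * (m₁ * G.s i) := by
            apply Nat.mul_le_mul_left
            rw [hF₁s]
            have := hFfeas i hi
            simp only [if_neg hi0] at this
            exact this
        _ = (t * m₁) * G.s i := by ring
        _ ≤ m₂ * G.s i := by
            apply Nat.mul_le_mul_right
            calc t * m₁ ≤ t ^ (k + 1) * m₁ :=
                  Nat.mul_le_mul_right _ (Nat.le_self_pow (by omega) t)
              _ ≤ m₂ := htm
  have hF'le : nCopies F' H ≤ Nmax (fun i => if i = 0 then m₀ else m₂ * G.s i) k H :=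
    le_nmax F' hfeas2
  have hkey2 : Nmax (fun i => if i = 0 then m₀ else m₁ * G.s i) k H ≤ nCopies F₁ H := by
    rw [Nmax, hFN]
    exact nCopies_le_mapC he F H
  calc t * Nmax (fun i => if i = 0 then m₀ else m₁ * G.s i) k H
      ≤ t * nCopies F₁ H := Nat.mul_le_mul_left _ hkey2
    _ ≤ 2 * nCopies F' H := hFc
    _ ≤ 2 * Nmax (fun i => if i = 0 then m₀ else m₂ * G.s i) k H :=
        Nat.mul_le_mul_left _ hF'le

end SComplex

namespace SComplex

lemma dim_s_pos {G : SComplex} {k : ℕ} (hk : 1 ≤ k) (hGdim : G.dim = k) : 0 < G.s k := by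
  have hdim : G.faces.sup Finset.card - 1 = k := hGdim
  have hke : G.faces.sup Finset.card = k + 1 := by omega
  obtain ⟨b, hb, hbc⟩ := Finset.exists_mem_eq_sup G.faces G.faces_nonempty Finset.card
  rw [s, Finset.card_pos]
  exact ⟨b, Finset.mem_filter.2 ⟨hb, by omega⟩⟩

end SComplex



open SComplex

/-- Lemma `l:compare.N`: if `H` is a `k`-dimensional subcomplex of `G`
(`dim G = k ≥ 1`) with `s_k(H) > 0`, then there is a constant `C_H ∈ (1,∞)` such that for
every positive integer `m₀` and all integers `0 ≤ m₁ < m₂ ≤ m₀^{k+1}/s_k(G)`,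
`N(m₀, m₁s₁(G), …, m₁s_k(G); H) ≤ C_H (m₁/m₂)^{1/(k+1)} N(m₀, m₂s₁(G), …, m₂s_k(G); H)`. -/
theorem stmt_3 (k : ℕ) (hk : 1 ≤ k) (G : SComplex) (hGdim : G.dim = k)
    (H : SComplex) (hHG : H.IsSubcomplex G) (hHdim : H.dim = k) (hHk : 0 < H.s k) :
    ∃ C : ℝ, 1 < C ∧
      ∀ m₀ m₁ m₂ : ℕ, 0 < m₀ → m₁ < m₂ → (m₂ : ℝ) ≤ (m₀ : ℝ) ^ (k + 1) / (G.s k : ℝ) →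
        (Nmax (fun i => if i = 0 then m₀ else m₁ * G.s i) k H : ℝ) ≤
          C * ((m₁ : ℝ) / (m₂ : ℝ)) ^ ((1 : ℝ) / (k + 1)) *
            (Nmax (fun i => if i = 0 then m₀ else m₂ * G.s i) k H : ℝ) := by
  classical
  have hGk : 0 < G.s k := dim_s_pos hk hGdim
  set T₀ : ℕ := 2 * (2 * H.s 0) ^ (k + 1) with hT₀
  have hT₀pos : 0 < T₀ :=
    Nat.mul_pos (by norm_num) (pow_pos (by
      have := h_ge hHk; omega : 0 < 2 * H.s 0) (k + 1))
  refine ⟨(T₀ : ℝ) + 4, by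
    have : (1 : ℝ) ≤ (T₀ : ℝ) := by exact_mod_cast hT₀pos
    linarith, ?_⟩
  intro m₀ m₁ m₂ hm₀ hm12 hm2cap
  set N₁ := Nmax (fun i => if i = 0 then m₀ else m₁ * G.s i) k H with hN₁
  set N₂ := Nmax (fun i => if i = 0 then m₀ else m₂ * G.s i) k H with hN₂
  have hm₂pos : 0 < m₂ := by omega
  have hGkR : (0 : ℝ) < (G.s k : ℝ) := by exact_mod_cast hGk
  have hcapR : (m₂ : ℝ) * (G.s k : ℝ) ≤ (m₀ : ℝ) ^ (k + 1) :=
    (le_div_iff₀ hGkR).1 hm2cap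
  have hcap : m₂ * G.s k ≤ m₀ ^ (k + 1) := by exact_mod_cast hcapR
  -- nonnegativity of the right side
  have hρnn : (0 : ℝ) ≤ ((m₁ : ℝ) / (m₂ : ℝ)) ^ ((1 : ℝ) / (k + 1)) :=
    Real.rpow_nonneg (by positivity) _
  have hCpos : (0 : ℝ) < (T₀ : ℝ) + 4 := by positivity
  rcases Nat.eq_zero_or_pos m₁ with hm₁0 | hm₁pos
  · -- m₁ = 0 : the left side vanishes
    subst hm₁0
    have hz : N₁ = 0 := nmax_zero_budget hk G H hHk hm₀
    rw [hz]
    push_cast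
    have : (0 : ℝ) ≤ (N₂ : ℝ) := by positivity
    positivity
  -- now m₁ ≥ 1
  have hm₁R : (0 : ℝ) < (m₁ : ℝ) := by exact_mod_cast hm₁pos
  have hm₂R : (0 : ℝ) < (m₂ : ℝ) := by exact_mod_cast hm₂pos
  set x : ℝ := ((m₂ : ℝ) / (m₁ : ℝ)) ^ ((1 : ℝ) / (k + 1)) with hx
  have hbase : (0 : ℝ) < (m₂ : ℝ) / (m₁ : ℝ) := by positivity
  have hxpos : 0 < x := Real.rpow_pos_of_pos hbase _
  set t : ℕ := ⌊x⌋₊ with hts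
  have hxt : (t : ℝ) ≤ x := Nat.floor_le hxpos.le
  have hxt1 : x < t + 1 := Nat.lt_floor_add_one x
  have hexp : (1 : ℝ) / (k + 1) = ((k + 1 : ℕ) : ℝ)⁻¹ := by push_cast; rw [one_div]
  have hxpow : x ^ (k + 1) = (m₂ : ℝ) / (m₁ : ℝ) := by
    rw [hx, hexp]
    exact Real.rpow_inv_natCast_pow hbase.le (by omega)
  have hρx : ((m₁ : ℝ) / (m₂ : ℝ)) ^ ((1 : ℝ) / (k + 1)) = x⁻¹ := by
    rw [hx, ← Real.inv_rpow hbase.le, inv_div]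
  rcases lt_or_ge t T₀ with hsmall | hlarge
  · -- small ratio: use monotonicity
    have hmono : N₁ ≤ N₂ := by
      apply nmax_mono
      intro i hi
      by_cases hi0 : i = 0
      · subst hi0; simp
      · simp only [if_neg hi0]
        exact Nat.mul_le_mul_right _ (by omega)
    have hxT : x ≤ (T₀ : ℝ) := by
      have : (t : ℝ) + 1 ≤ (T₀ : ℝ) := by exact_mod_cast Nat.succ_le_of_lt hsmall
      linarith
    have hρT : (T₀ : ℝ)⁻¹ ≤ x⁻¹ := inv_anti₀ hxpos hxT
    have hone : (1 : ℝ) ≤ ((T₀ : ℝ) + 4) * x⁻¹ := by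
      have hT₀R : (0 : ℝ) < (T₀ : ℝ) := by exact_mod_cast hT₀pos
      calc (1 : ℝ) = (T₀ : ℝ) * (T₀ : ℝ)⁻¹ := by field_simp
        _ ≤ ((T₀ : ℝ) + 4) * (T₀ : ℝ)⁻¹ := by
            apply mul_le_mul_of_nonneg_right (by linarith) (by positivity)
        _ ≤ ((T₀ : ℝ) + 4) * x⁻¹ := by
            apply mul_le_mul_of_nonneg_left hρT (by positivity)
    calc (N₁ : ℝ) ≤ (N₂ : ℝ) := by exact_mod_cast hmono
      _ = 1 * (N₂ : ℝ) := by ring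
      _ ≤ (((T₀ : ℝ) + 4) * x⁻¹) * (N₂ : ℝ) := by
          apply mul_le_mul_of_nonneg_right hone (by positivity)
      _ = ((T₀ : ℝ) + 4) * ((m₁ : ℝ) / (m₂ : ℝ)) ^ ((1 : ℝ) / (k + 1)) * (N₂ : ℝ) := by
          rw [hρx]
  · -- large ratio: use the boosting construction
    have htm : t ^ (k + 1) * m₁ ≤ m₂ := by
      have hR : ((t : ℝ)) ^ (k + 1) * (m₁ : ℝ) ≤ (m₂ : ℝ) := by
        have h1 : ((t : ℝ)) ^ (k + 1) ≤ x ^ (k + 1) :=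
          pow_le_pow_left₀ (by positivity) hxt _
        rw [hxpow] at h1
        calc ((t : ℝ)) ^ (k + 1) * (m₁ : ℝ) ≤ ((m₂ : ℝ) / (m₁ : ℝ)) * (m₁ : ℝ) :=
              mul_le_mul_of_nonneg_right h1 hm₁R.le
          _ = (m₂ : ℝ) := by field_simp
      exact_mod_cast hR
    have hboost := nmax_boost hk G H hHk hm₀ (le_of_eq hT₀ |>.trans hlarge) htm hcap
      hm₁pos hGk
    have htpos : 0 < t := by omega
    have htR : (1 : ℝ) ≤ (t : ℝ) := by exact_mod_cast htpos
    have hboostR : (t : ℝ) * (N₁ : ℝ) ≤ 2 * (N₂ : ℝ) := by exact_mod_cast hboost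
    have hN₂nn : (0 : ℝ) ≤ (N₂ : ℝ) := by positivity
    have hρ1 : ((t : ℝ) + 1)⁻¹ ≤ x⁻¹ := inv_anti₀ hxpos (by linarith)
    -- N₁ ≤ 2 N₂ / t ≤ 4 N₂/(t+1) ≤ 4 x⁻¹ N₂ ≤ C x⁻¹ N₂
    have step1 : (N₁ : ℝ) ≤ 2 * (N₂ : ℝ) / (t : ℝ) := by
      rw [le_div_iff₀ (by linarith)]
      linarith [hboostR]
    have step2 : 2 * (N₂ : ℝ) / (t : ℝ) ≤ 4 * (N₂ : ℝ) / ((t : ℝ) + 1) := by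
      rw [div_le_div_iff₀ (by linarith) (by linarith)]
      nlinarith [hN₂nn, htR]
    have step3 : 4 * (N₂ : ℝ) / ((t : ℝ) + 1) ≤ 4 * (N₂ : ℝ) * x⁻¹ := by
      rw [div_eq_mul_inv]
      apply mul_le_mul_of_nonneg_left hρ1 (by positivity)
    have step4 : 4 * (N₂ : ℝ) * x⁻¹ ≤ ((T₀ : ℝ) + 4) * x⁻¹ * (N₂ : ℝ) := by
      have h1 : 4 * (N₂ : ℝ) * x⁻¹ = 4 * (x⁻¹ * (N₂ : ℝ)) := by ring
      have h2 : ((T₀ : ℝ) + 4) * x⁻¹ * (N₂ : ℝ) = ((T₀ : ℝ) + 4) * (x⁻¹ * (N₂ : ℝ)) := by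
        ring
      rw [h1, h2]
      apply mul_le_mul_of_nonneg_right ?_ (by positivity)
      have hT0nn : (0 : ℝ) ≤ (T₀ : ℝ) := by positivity
      linarith
    calc (N₁ : ℝ) ≤ 2 * (N₂ : ℝ) / (t : ℝ) := step1
      _ ≤ 4 * (N₂ : ℝ) / ((t : ℝ) + 1) := step2
      _ ≤ 4 * (N₂ : ℝ) * x⁻¹ := step3
      _ ≤ ((T₀ : ℝ) + 4) * x⁻¹ * (N₂ : ℝ) := step4
      _ = ((T₀ : ℝ) + 4) * ((m₁ : ℝ) / (m₂ : ℝ)) ^ ((1 : ℝ) / (k + 1)) * (N₂ : ℝ) := by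
          rw [hρx]
end

section
/- Let G be a simplicial complex of dimension k ≥ 1, let K_{k,n} be the complete complex of dimension k on n vertices, and let G_1, ..., G_M (M = (n)_{s_0(G)}) be the ordered copies of G in K_{k,n}. Let F be any simplicial complex on a subset of the n vertices with s_i(F) ≤ (m-1)·s_i(G) for i = 0,1,...,k (for some integer m ≥ 2), and let H be a subcomplex of G of positive dimension. Then the number of indices i ∈ {1,...,M} for which the intersection of F with G_i is isomorphic to H is at most N(n, (m-1)·s_1(G), ..., (m-1)·s_k(G); H) · ((n)_{s_0(G)}/(n)_{s_0(H)}) · s_0(G)!, where (n)_s = n(n-1)···(n-s+1). -/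
open scoped BigOperators

open SComplex


section AuxLemmas

lemma aux_ext {A B : SComplex} (h : A.faces = B.faces) : A = B := by
  cases A; cases B; simpa using h

lemma aux_mem_verts (F : SComplex) (v : ℕ) : v ∈ F.verts ↔ ∃ t ∈ F.faces, v ∈ t := by
  simp [SComplex.verts, Finset.mem_sup]

lemma aux_face_sub (F : SComplex) {t : Finset ℕ} (ht : t ∈ F.faces) : t ⊆ F.verts :=
  fun v hv => (aux_mem_verts F v).2 ⟨t, ht, hv⟩

lemma aux_s0 (F : SComplex) : F.s 0 = F.verts.card := by
  have himg : F.simplices 0 = F.verts.image (fun v => ({v} : Finset ℕ)) := by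
    ext t
    simp only [SComplex.simplices, Finset.mem_filter, Finset.mem_image, Finset.card_eq_one,
      zero_add]
    constructor
    · rintro ⟨ht, v, rfl⟩
      exact ⟨v, (aux_mem_verts F v).2 ⟨{v}, ht, Finset.mem_singleton_self v⟩, rfl⟩
    · rintro ⟨v, hv, rfl⟩
      obtain ⟨u, hu, hvu⟩ := (aux_mem_verts F v).1 hv
      exact ⟨F.down_closed u hu {v} (Finset.singleton_subset_iff.2 hvu) (by simp), v, rfl⟩
  rw [SComplex.s, himg, Finset.card_image_of_injective _ (fun a b => by simp)]

lemma aux_verts_image (A : SComplex) (χ : ℕ → ℕ) :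
    (A.faces.image (Finset.image χ)).sup id = A.verts.image χ := by
  ext w
  simp only [Finset.mem_sup, Finset.mem_image, id_eq]
  constructor
  · rintro ⟨t', ⟨t, ht, rfl⟩, hw⟩
    obtain ⟨u, hu, rfl⟩ := Finset.mem_image.1 hw
    exact ⟨u, aux_face_sub A ht hu, rfl⟩
  · rintro ⟨u, hu, rfl⟩
    obtain ⟨t, ht, hut⟩ := (aux_mem_verts A u).1 hu
    exact ⟨t.image χ, ⟨t, ht, rfl⟩, Finset.mem_image_of_mem χ hut⟩

lemma aux_dF_le_fact {h g : ℕ} (hle : h ≤ g) : g.descFactorial h ≤ g.factorial := by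
  have h2 := Nat.descFactorial_mul_descFactorial (n := g) (k := h) (m := g) hle
  calc g.descFactorial h ≤ (g - h).descFactorial (g - h) * g.descFactorial h :=
        Nat.le_mul_of_pos_left _ (by rw [Nat.descFactorial_self]; exact Nat.factorial_pos _)
    _ = g.descFactorial g := h2
    _ = g.factorial := Nat.descFactorial_self g

lemma aux_dF_pos {h n : ℕ} (hle : h ≤ n) : 0 < n.descFactorial h :=
  Nat.pos_of_ne_zero (fun hc => absurd (Nat.descFactorial_eq_zero_iff_lt.1 hc) (not_lt.2 hle))

end AuxLemmas
/-- counting bound on `#{i : F ∩ G_i ≅ H}`: let `G` have dimension `k ≥ 1`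
and identify the ordered copies of `G` in the complete `k`-dimensional complex `K_{k,n}` on
`{1,…,n}` with the injective maps `φ` from the vertices of `G` into `{1,…,n}` (normalized to
`0` off the vertices of `G`); there are `M = (n)_{s₀(G)}` of them. If `F` is a simplicial
complex on a subset of `{1,…,n}` with `s_i(F) ≤ (m-1)s_i(G)` for `i ≤ k` (some `m ≥ 2`) and
`H` is a subcomplex of `G` of positive dimension, then the number of ordered copies whose
image complex intersects `F` in a copy of `H` is at most
`N(n,(m-1)s₁(G),…,(m-1)s_k(G);H) · ((n)_{s₀(G)}/(n)_{s₀(H)}) · s₀(G)!`. -/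
theorem stmt_8 (k : ℕ) (hk : 1 ≤ k) (n : ℕ) (G : SComplex) (hGdim : G.dim = k)
    (m : ℕ) (hm : 2 ≤ m)
    (F : SComplex) (hFv : F.verts ⊆ Finset.Icc 1 n)
    (hFs : ∀ i ≤ k, F.s i ≤ (m - 1) * G.s i)
    (H : SComplex) (hHG : H.IsSubcomplex G) (hHdim : 1 ≤ H.dim) :
    (Set.ncard {φ : ℕ → ℕ |
        (Set.InjOn φ ↑G.verts ∧ (∀ v ∉ G.verts, φ v = 0) ∧
          ∀ v ∈ G.verts, φ v ∈ Finset.Icc 1 n) ∧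
        ∃ ψ : ℕ → ℕ, Set.InjOn ψ ↑H.verts ∧
          F.faces ∩ G.faces.image (Finset.image φ) =
            H.faces.image (Finset.image ψ)} : ℝ) ≤
      (Nmax (fun i => if i = 0 then n else (m - 1) * G.s i) k H : ℝ) *
        ((n.descFactorial (G.s 0) : ℝ) / (n.descFactorial (H.s 0) : ℝ)) *
        ((G.s 0).factorial : ℝ) := by
  classical
  set S : Set (ℕ → ℕ) := {φ : ℕ → ℕ |
      (Set.InjOn φ ↑G.verts ∧ (∀ v ∉ G.verts, φ v = 0) ∧
        ∀ v ∈ G.verts, φ v ∈ Finset.Icc 1 n) ∧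
      ∃ ψ : ℕ → ℕ, Set.InjOn ψ ↑H.verts ∧
        F.faces ∩ G.faces.image (Finset.image φ) =
          H.faces.image (Finset.image ψ)} with hSdef
  rcases Set.eq_empty_or_nonempty S with hE | ⟨φ0, hφ0⟩
  · rw [hE, Set.ncard_empty]
    push_cast
    positivity
  set g := G.s 0 with hgdef
  set h := H.s 0 with hhdef
  set Nm := Nmax (fun i => if i = 0 then n else (m - 1) * G.s i) k H with hNmdef
  set f : (ℕ → ℕ) → Finset (Finset ℕ) :=
    fun φ => F.faces ∩ G.faces.image (Finset.image φ) with hfdef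
  have hmemS : ∀ φ ∈ S, (Set.InjOn φ ↑G.verts ∧ (∀ v ∉ G.verts, φ v = 0) ∧
        ∀ v ∈ G.verts, φ v ∈ Finset.Icc 1 n) ∧
      ∃ ψ : ℕ → ℕ, Set.InjOn ψ ↑H.verts ∧
        f φ = H.faces.image (Finset.image ψ) := fun φ hφ => hφ
  have hGvc : G.verts.card = g := (aux_s0 G).symm
  have hHvc : H.verts.card = h := (aux_s0 H).symm
  obtain ⟨⟨hinj0, hzero0, hmem0⟩, ψ0, hψ0inj, hψ0⟩ := hmemS φ0 hφ0
  have hIccCard : (Finset.Icc 1 n).card = n := by simp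
  have hg_le_n : g ≤ n := by
    rw [← hGvc, ← hIccCard]
    exact Finset.card_le_card_of_injOn φ0 hmem0 hinj0
  have hVfact : ∀ φ ∈ S, ((f φ).sup id).card = h ∧ (f φ).sup id ⊆ Finset.Icc 1 n := by
    intro φ hφ
    obtain ⟨⟨hinj, hzero, hmem⟩, ψ, hψinj, hψ⟩ := hmemS φ hφ
    constructor
    · rw [hψ, aux_verts_image, Finset.card_image_of_injOn hψinj, hHvc]
    · intro w hw
      have h1 : (f φ).sup id ⊆ F.faces.sup id :=
        Finset.sup_mono Finset.inter_subset_left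
      exact hFv (h1 hw)
  have hVhit : ∀ φ : ℕ → ℕ, ∀ w ∈ (f φ).sup id, ∃ u ∈ G.verts, φ u = w := by
    intro φ w hw
    have h1 : (f φ).sup id ⊆ (G.faces.image (Finset.image φ)).sup id :=
      Finset.sup_mono Finset.inter_subset_right
    have h2 := h1 hw
    rw [aux_verts_image] at h2
    obtain ⟨u, hu, rfl⟩ := Finset.mem_image.1 h2
    exact ⟨u, hu, rfl⟩
  have hφ0S : φ0 ∈ S := hφ0
  have hh_le_g : h ≤ g := by
    have h1 : (f φ0).sup id ⊆ G.verts.image φ0 := by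
      intro w hw
      obtain ⟨u, hu, rfl⟩ := hVhit φ0 w hw
      exact Finset.mem_image_of_mem _ hu
    calc h = ((f φ0).sup id).card := (hVfact φ0 hφ0S).1.symm
      _ ≤ (G.verts.image φ0).card := Finset.card_le_card h1
      _ ≤ G.verts.card := Finset.card_image_le
      _ = g := hGvc
  have hh_le_n : h ≤ n := hh_le_g.trans hg_le_n
  have hn1 : 1 ≤ n := by
    obtain ⟨t, ht⟩ := G.faces_nonempty
    obtain ⟨v, hv⟩ := Finset.nonempty_iff_ne_empty.2 (fun hc => G.empty_not_mem (hc ▸ ht))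
    have hmv := hmem0 v (aux_face_sub G ht hv)
    have := Finset.mem_Icc.1 hmv
    omega
  haveI : Nonempty ↥(Finset.Icc 1 n) := ⟨⟨1, Finset.mem_Icc.2 ⟨le_refl 1, hn1⟩⟩⟩
  have hSfin : S.Finite := by
    have hinj : Set.InjOn (fun (φ : ℕ → ℕ) (v : ↥G.verts) =>
        if hm' : φ v.1 ∈ Finset.Icc 1 n then (⟨φ v.1, hm'⟩ : ↥(Finset.Icc 1 n))
        else Classical.arbitrary _) S := by
      intro φ hφ φ' hφ' heq
      obtain ⟨⟨_, hz, hm1⟩, _⟩ := hmemS φ hφ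
      obtain ⟨⟨_, hz', hm1'⟩, _⟩ := hmemS φ' hφ'
      funext x
      by_cases hx : x ∈ G.verts
      · have h2 := congrFun heq ⟨x, hx⟩
        dsimp only at h2
        rw [dif_pos (hm1 x hx), dif_pos (hm1' x hx)] at h2
        exact congrArg Subtype.val h2
      · rw [hz x hx, hz' x hx]
    exact Set.Finite.of_finite_image (Set.toFinite _) hinj
  set sF := hSfin.toFinset with hsFdef
  have hSncard : S.ncard = sF.card := Set.ncard_eq_toFinset_card S hSfin
  have stepA : ∀ c ∈ sF.image f,
      (sF.filter (fun φ => f φ = c)).card ≤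
        (n - h).descFactorial (g - h) * g.descFactorial h := by
    intro c hc
    obtain ⟨φ1, hφ1, hfφ1⟩ := Finset.mem_image.1 hc
    have hφ1S : φ1 ∈ S := hSfin.mem_toFinset.1 hφ1
    set V : Finset ℕ := c.sup id with hVdef
    have hVIcc : V ⊆ Finset.Icc 1 n := by
      rw [hVdef, ← hfφ1]; exact (hVfact φ1 hφ1S).2
    have hVh : V.card = h := by rw [hVdef, ← hfφ1]; exact (hVfact φ1 hφ1S).1
    have hV0 : ∀ w ∈ V, w ≠ 0 := fun w hw => by
      have := Finset.mem_Icc.1 (hVIcc hw); omega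
    set p : (ℕ → ℕ) → (ℕ → ℕ) :=
      fun φ x => if x ∈ G.verts ∧ φ x ∈ V then φ x else 0 with hpdef
    set fib := sF.filter (fun φ => f φ = c) with hfibdef
    have hfibS : ∀ φ ∈ fib, φ ∈ S ∧ f φ = c := fun φ hφ => by
      rw [hfibdef, Finset.mem_filter] at hφ
      exact ⟨hSfin.mem_toFinset.1 hφ.1, hφ.2⟩
    have hp1 : ∀ φ x, p φ x ≠ 0 → x ∈ G.verts ∧ φ x ∈ V ∧ p φ x = φ x := by
      intro φ x hx
      by_cases hcond : x ∈ G.verts ∧ φ x ∈ V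
      · exact ⟨hcond.1, hcond.2, by rw [hpdef]; dsimp only; rw [if_pos hcond]⟩
      · exfalso; apply hx; rw [hpdef]; dsimp only; rw [if_neg hcond]
    have hp2 : ∀ φ ∈ fib, ∀ w ∈ V, ∃ u, u ∈ G.verts ∧ φ u = w ∧ p φ u = w := by
      intro φ hφ w hw
      obtain ⟨hφS, hfc⟩ := hfibS φ hφ
      obtain ⟨u, hu, huw⟩ := hVhit φ w (by rw [hfc]; exact hw)
      refine ⟨u, hu, huw, ?_⟩
      rw [hpdef]; dsimp only
      rw [if_pos ⟨hu, by rw [huw]; exact hw⟩]; exact huw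
    have hinner : ∀ ψ ∈ fib.image p,
        (fib.filter (fun φ => p φ = ψ)).card ≤ (n - h).descFactorial (g - h) := by
      intro ψ hψ
      obtain ⟨φ2, hφ2, hpφ2⟩ := Finset.mem_image.1 hψ
      set T := G.verts.filter (fun x => ¬ ψ x = 0) with hTdef
      set D := G.verts.filter (fun x => ψ x = 0) with hDdef
      have hψT : ∀ x ∈ T, ψ x = φ2 x ∧ φ2 x ∈ V := by
        intro x hx
        rw [hTdef, Finset.mem_filter] at hx
        have h5 := hp1 φ2 x (by rw [hpφ2]; exact hx.2)
        rw [← hpφ2, h5.2.2]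
        exact ⟨rfl, h5.2.1⟩
      have hTV : T.image ψ = V := by
        apply Finset.Subset.antisymm
        · intro w hw
          obtain ⟨x, hx, rfl⟩ := Finset.mem_image.1 hw
          exact ((hψT x hx).1).symm ▸ (hψT x hx).2
        · intro w hw
          obtain ⟨u, hu, hφu, hpu⟩ := hp2 φ2 hφ2 w hw
          refine Finset.mem_image.2 ⟨u, ?_, by rw [← hpφ2]; exact hpu⟩
          rw [hTdef, Finset.mem_filter]
          refine ⟨hu, ?_⟩
          rw [← hpφ2, hpu]
          exact hV0 w hw
      have hinjφ2 : Set.InjOn φ2 ↑G.verts := ((hmemS φ2 (hfibS φ2 hφ2).1).1).1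
      have hinjT : Set.InjOn ψ ↑T := by
        intro a ha b hb hab
        rw [Finset.mem_coe] at ha hb
        have hTsub : T ⊆ G.verts := Finset.filter_subset _ _
        exact hinjφ2 (Finset.mem_coe.2 (hTsub ha)) (Finset.mem_coe.2 (hTsub hb))
          (by rw [← (hψT a ha).1, ← (hψT b hb).1, hab])
      have hTcard : T.card = h := by
        rw [← hVh, ← hTV, Finset.card_image_of_injOn hinjT]
      have hDcard : D.card = g - h := by
        have hsplit := Finset.card_filter_add_card_filter_not
          (s := G.verts) (p := fun x => ψ x = 0)
        rw [← hDdef] at hsplit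
        have : D.card + T.card = g := by rw [← hGvc] at *; exact hsplit
        omega
      set C := Finset.Icc 1 n \ V with hCdef
      have hCcard : C.card = n - h := by
        rw [hCdef, Finset.card_sdiff_of_subset hVIcc, hIccCard, hVh]
      set f2 : (ℕ → ℕ) → Option (↥D ↪ ↥C) := fun φ =>
        if h3 : (∀ x : ↥D, φ x.1 ∈ C) ∧ Set.InjOn φ ↑D then
          some ⟨fun x => ⟨φ x.1, h3.1 x⟩, by
            intro a b hab
            exact Subtype.ext (h3.2 (Finset.mem_coe.2 a.2) (Finset.mem_coe.2 b.2)
              (congrArg Subtype.val hab))⟩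
        else none with hf2def
      have hP2 : ∀ φ ∈ fib.filter (fun φ => p φ = ψ),
          (∀ x : ↥D, φ x.1 ∈ C) ∧ Set.InjOn φ ↑D := by
        intro φ hφ
        rw [Finset.mem_filter] at hφ
        obtain ⟨hφfib, hpφ⟩ := hφ
        obtain ⟨hφS, hfc⟩ := hfibS φ hφfib
        obtain ⟨⟨hinj, hz, hm1⟩, _⟩ := hmemS φ hφS
        constructor
        · rintro ⟨x, hx⟩
          rw [hDdef, Finset.mem_filter] at hx
          rw [hCdef]
          refine Finset.mem_sdiff.2 ⟨hm1 x hx.1, fun hxV => ?_⟩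
          have h6 : p φ x = φ x := by
            rw [hpdef]; dsimp only; rw [if_pos ⟨hx.1, hxV⟩]
          have h7 : φ x ≠ 0 := by
            have := Finset.mem_Icc.1 (hm1 x hx.1); omega
          rw [hpφ] at h6
          exact h7 (h6.symm.trans hx.2)
        · refine hinj.mono ?_
          intro x hx
          rw [Finset.mem_coe] at hx ⊢
          exact Finset.filter_subset _ _ hx
      have hmap2 : ∀ φ ∈ fib.filter (fun φ => p φ = ψ),
          f2 φ ∈ Finset.univ.image (some : (↥D ↪ ↥C) → Option (↥D ↪ ↥C)) := by
        intro φ hφ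
        rw [hf2def]; dsimp only; rw [dif_pos (hP2 φ hφ)]
        exact Finset.mem_image.2 ⟨_, Finset.mem_univ _, rfl⟩
      have hinj2 : Set.InjOn f2 ↑(fib.filter (fun φ => p φ = ψ)) := by
        intro φ hφ φ' hφ' heq
        rw [Finset.mem_coe] at hφ hφ'
        have e1 := hP2 φ hφ
        have e2 := hP2 φ' hφ'
        rw [hf2def] at heq; dsimp only at heq
        rw [dif_pos e1, dif_pos e2] at heq
        have heq2 := Option.some.inj heq
        have hDeq : ∀ x : ↥D, φ x.1 = φ' x.1 := by
          intro x
          have := DFunLike.congr_fun heq2 x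
          exact congrArg Subtype.val this
        obtain ⟨hφfib, hpφ⟩ := Finset.mem_filter.1 hφ
        obtain ⟨hφfib', hpφ'⟩ := Finset.mem_filter.1 hφ'
        obtain ⟨⟨_, hz, _⟩, _⟩ := hmemS φ (hfibS φ hφfib).1
        obtain ⟨⟨_, hz', _⟩, _⟩ := hmemS φ' (hfibS φ' hφfib').1
        funext x
        by_cases hx : x ∈ G.verts
        · by_cases hx0 : ψ x = 0
          · exact hDeq ⟨x, by rw [hDdef, Finset.mem_filter]; exact ⟨hx, hx0⟩⟩
          · have h5 := hp1 φ x (by rw [hpφ]; exact hx0)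
            have h5' := hp1 φ' x (by rw [hpφ']; exact hx0)
            rw [← h5.2.2, hpφ, ← hpφ', h5'.2.2]
        · rw [hz x hx, hz' x hx]
      calc (fib.filter (fun φ => p φ = ψ)).card
          ≤ (Finset.univ.image (some : (↥D ↪ ↥C) → Option (↥D ↪ ↥C))).card :=
            Finset.card_le_card_of_injOn f2 hmap2 hinj2
        _ = Fintype.card (↥D ↪ ↥C) := by
            rw [Finset.card_image_of_injective _ (Option.some_injective _), Finset.card_univ]
        _ = (n - h).descFactorial (g - h) := by
            rw [Fintype.card_embedding_eq, Fintype.card_coe, Fintype.card_coe, hCcard, hDcard]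
    have hmid : (fib.image p).card ≤ g.descFactorial h := by
      have hex : ∀ ψ' ∈ fib.image p,
          ∃ e : ↥V ↪ ↥G.verts, ∀ w : ↥V, ψ' (e w).1 = w.1 := by
        intro ψ' hψ'
        obtain ⟨φ2, hφ2, hpφ2⟩ := Finset.mem_image.1 hψ'
        have hchoice : ∀ w : ↥V, ∃ u : ↥G.verts, ψ' u.1 = w.1 := by
          rintro ⟨w, hw⟩
          obtain ⟨u, hu, _, hpu⟩ := hp2 φ2 hφ2 w hw
          exact ⟨⟨u, hu⟩, by rw [← hpφ2]; exact hpu⟩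
        choose e he using hchoice
        refine ⟨⟨e, fun a b hab => ?_⟩, he⟩
        apply Subtype.ext
        rw [← he a, ← he b, hab]
      set f3 : (ℕ → ℕ) → Option (↥V ↪ ↥G.verts) := fun ψ' =>
        if h4 : ∃ e : ↥V ↪ ↥G.verts, ∀ w : ↥V, ψ' (e w).1 = w.1 then some h4.choose
        else none with hf3def
      have hval : ∀ ψ' ∈ fib.image p, ∀ e : ↥V ↪ ↥G.verts,
          (∀ w : ↥V, ψ' (e w).1 = w.1) →
          ∀ x, ψ' x ≠ 0 → ∃ w : ↥V, (e w).1 = x ∧ ψ' x = w.1 := by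
        intro ψ' hψ' e he x hx
        obtain ⟨φ2, hφ2, hpφ2⟩ := Finset.mem_image.1 hψ'
        have hinjφ2 : Set.InjOn φ2 ↑G.verts := ((hmemS φ2 (hfibS φ2 hφ2).1).1).1
        have h5 := hp1 φ2 x (by rw [hpφ2]; exact hx)
        set w : ↥V := ⟨φ2 x, h5.2.1⟩ with hwdef
        have hew : ψ' (e w).1 = φ2 x := he w
        have hne : p φ2 (e w).1 ≠ 0 := by
          rw [hpφ2, hew]
          exact hV0 _ h5.2.1
        have h6 := hp1 φ2 (e w).1 hne
        have hval2 : φ2 (e w).1 = φ2 x := by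
          rw [← h6.2.2, hpφ2, hew]
        have hEq : (e w).1 = x :=
          hinjφ2 (Finset.mem_coe.2 (e w).2) (Finset.mem_coe.2 h5.1) hval2
        refine ⟨w, hEq, ?_⟩
        rw [← hpφ2] at hx ⊢
        rw [h5.2.2]
      have hdet : ∀ ψa ∈ fib.image p, ∀ ψb : ℕ → ℕ, ∀ e : ↥V ↪ ↥G.verts,
          (∀ w : ↥V, ψa (e w).1 = w.1) → (∀ w : ↥V, ψb (e w).1 = w.1) →
          ∀ x, ψa x ≠ 0 → ψb x = ψa x := by
        intro ψa hψa ψb e hea heb x hx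
        obtain ⟨w, hwx, hwv⟩ := hval ψa hψa e hea x hx
        rw [← hwx, heb w, hea w]
      have hmap3 : ∀ ψ' ∈ fib.image p,
          f3 ψ' ∈ Finset.univ.image
            (some : (↥V ↪ ↥G.verts) → Option (↥V ↪ ↥G.verts)) := by
        intro ψ' hψ'
        rw [hf3def]; dsimp only; rw [dif_pos (hex ψ' hψ')]
        exact Finset.mem_image.2 ⟨_, Finset.mem_univ _, rfl⟩
      have hinj3 : Set.InjOn f3 ↑(fib.image p) := by
        intro ψa hψa ψb hψb heq
        rw [Finset.mem_coe] at hψa hψb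
        rw [hf3def] at heq; dsimp only at heq
        rw [dif_pos (hex ψa hψa), dif_pos (hex ψb hψb)] at heq
        have heq2 := Option.some.inj heq
        have hea := (hex ψa hψa).choose_spec
        have heb := (hex ψb hψb).choose_spec
        rw [← heq2] at heb
        funext x
        by_cases ha : ψa x = 0
        · by_cases hb : ψb x = 0
          · rw [ha, hb]
          · exact hdet ψb hψb ψa (hex ψa hψa).choose heb hea x hb
        · exact (hdet ψa hψa ψb (hex ψa hψa).choose hea heb x ha).symm
      calc (fib.image p).card
          ≤ (Finset.univ.image
              (some : (↥V ↪ ↥G.verts) → Option (↥V ↪ ↥G.verts))).card :=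
            Finset.card_le_card_of_injOn f3 hmap3 hinj3
        _ = Fintype.card (↥V ↪ ↥G.verts) := by
            rw [Finset.card_image_of_injective _ (Option.some_injective _), Finset.card_univ]
        _ = g.descFactorial h := by
            rw [Fintype.card_embedding_eq, Fintype.card_coe, Fintype.card_coe, hVh, hGvc]
    calc fib.card ≤ (n - h).descFactorial (g - h) * (fib.image p).card :=
          Finset.card_le_mul_card_image (f := p) fib _ hinner
      _ ≤ (n - h).descFactorial (g - h) * g.descFactorial h :=
          Nat.mul_le_mul_left _ hmid
  have hFcond : ∀ i ≤ k, F.s i ≤ (fun i => if i = 0 then n else (m - 1) * G.s i) i := by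
    intro i hi
    by_cases h0 : i = 0
    · subst h0
      simp only [if_pos rfl]
      rw [aux_s0, ← hIccCard]
      exact Finset.card_le_card hFv
    · simp only [if_neg h0]
      exact hFs i hi
  have hbdd : BddAbove {t : ℕ | ∃ F' : SComplex,
      (∀ i ≤ k, F'.s i ≤ (fun i => if i = 0 then n else (m - 1) * G.s i) i) ∧
        t = nCopies F' H} := by
    refine ⟨2 ^ (2 ^ n), ?_⟩
    rintro t ⟨F', hF', rfl⟩
    have h0 : F'.s 0 ≤ n := by
      have := hF' 0 (Nat.zero_le k)
      simpa using this
    have hfc : F'.faces.card ≤ 2 ^ n := by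
      have hsub : F'.faces ⊆ F'.verts.powerset :=
        fun t' ht' => Finset.mem_powerset.2 (aux_face_sub F' ht')
      calc F'.faces.card ≤ F'.verts.powerset.card := Finset.card_le_card hsub
        _ = 2 ^ F'.verts.card := Finset.card_powerset _
        _ ≤ 2 ^ n := Nat.pow_le_pow_right (by norm_num) (by rw [← aux_s0]; exact h0)
    have hnc : nCopies F' H =
        Set.ncard {K : SComplex | K.IsSubcomplex F' ∧ K.Iso H} := rfl
    rw [hnc]
    calc Set.ncard {K : SComplex | K.IsSubcomplex F' ∧ K.Iso H}
        ≤ (↑F'.faces.powerset : Set (Finset (Finset ℕ))).ncard := by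
          refine Set.ncard_le_ncard_of_injOn (fun K => K.faces) ?_ ?_ ?_
          · rintro K ⟨hK1, _⟩
            exact Finset.mem_coe.2 (Finset.mem_powerset.2 hK1)
          · intro a _ b _ hab
            exact aux_ext hab
          · exact (F'.faces.powerset : Set (Finset (Finset ℕ))).toFinite
      _ = F'.faces.powerset.card := Set.ncard_coe_finset _
      _ = 2 ^ F'.faces.card := Finset.card_powerset _
      _ ≤ 2 ^ (2 ^ n) := Nat.pow_le_pow_right (by norm_num) hfc
  have hNle : nCopies F H ≤ Nm := le_csSup hbdd ⟨F, hFcond, rfl⟩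
  have hstepC : (sF.image f).card ≤ nCopies F H := by
    set q : Finset (Finset ℕ) → SComplex := fun c =>
      if h5 : c.Nonempty ∧ ∅ ∉ c ∧ ∀ s' ∈ c, ∀ t : Finset ℕ, t ⊆ s' → t ≠ ∅ → t ∈ c then
        ⟨c, h5.1, h5.2.1, h5.2.2⟩ else G with hqdef
    have hP3 : ∀ c ∈ sF.image f, c.Nonempty ∧ ∅ ∉ c ∧
        ∀ s' ∈ c, ∀ t : Finset ℕ, t ⊆ s' → t ≠ ∅ → t ∈ c := by
      intro c hc
      obtain ⟨φ1, hφ1, rfl⟩ := Finset.mem_image.1 hc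
      have hφ1S : φ1 ∈ S := hSfin.mem_toFinset.1 hφ1
      obtain ⟨⟨hinj, hz, hm1⟩, ψ1, hψ1inj, hψ1⟩ := hmemS φ1 hφ1S
      refine ⟨?_, ?_, ?_⟩
      · rw [hψ1]
        exact H.faces_nonempty.image _
      · intro hmem0'
        exact F.empty_not_mem (Finset.mem_inter.1 hmem0').1
      · intro s' hs' t hts htne
        have hs'F : s' ∈ F.faces := (Finset.mem_inter.1 hs').1
        obtain ⟨r, hr, hrs'⟩ := Finset.mem_image.1 (Finset.mem_inter.1 hs').2
        refine Finset.mem_inter.2 ⟨F.down_closed s' hs'F t hts htne, ?_⟩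
        refine Finset.mem_image.2 ⟨r.filter (fun u => φ1 u ∈ t), ?_, ?_⟩
        · apply G.down_closed r hr _ (Finset.filter_subset _ _)
          obtain ⟨y, hy⟩ := Finset.nonempty_iff_ne_empty.2 htne
          have hys' : y ∈ s' := hts hy
          rw [← hrs'] at hys'
          obtain ⟨u, hur, huy⟩ := Finset.mem_image.1 hys'
          intro hcempty
          have hmm : u ∈ r.filter (fun u => φ1 u ∈ t) :=
            Finset.mem_filter.2 ⟨hur, by rw [huy]; exact hy⟩
          rw [hcempty] at hmm
          exact absurd hmm (Finset.notMem_empty u)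
        · apply Finset.Subset.antisymm
          · intro y hy
            obtain ⟨u, hu, rfl⟩ := Finset.mem_image.1 hy
            exact (Finset.mem_filter.1 hu).2
          · intro y hy
            have hys' : y ∈ s' := hts hy
            rw [← hrs'] at hys'
            obtain ⟨u, hur, rfl⟩ := Finset.mem_image.1 hys'
            exact Finset.mem_image.2 ⟨u, Finset.mem_filter.2 ⟨hur, hy⟩, rfl⟩
    have hqfaces : ∀ c ∈ sF.image f, (q c).faces = c := by
      intro c hc
      rw [hqdef]; dsimp only; rw [dif_pos (hP3 c hc)]
    have hqmem : ∀ c ∈ sF.image f,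
        q c ∈ {K : SComplex | K.IsSubcomplex F ∧ K.Iso H} := by
      intro c hc
      obtain ⟨φ1, hφ1, hceq⟩ := Finset.mem_image.1 hc
      have hφ1S : φ1 ∈ S := hSfin.mem_toFinset.1 hφ1
      obtain ⟨_, ψ1, hψ1inj, hψ1⟩ := hmemS φ1 hφ1S
      constructor
      · show (q c).faces ⊆ F.faces
        rw [hqfaces c hc, ← hceq]
        exact Finset.inter_subset_left
      · exact ⟨ψ1, hψ1inj, by rw [hqfaces c hc, ← hceq]; exact hψ1⟩
    calc (sF.image f).card
        = (↑(sF.image f) : Set (Finset (Finset ℕ))).ncard :=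
          (Set.ncard_coe_finset _).symm
      _ ≤ Set.ncard {K : SComplex | K.IsSubcomplex F ∧ K.Iso H} := by
          refine Set.ncard_le_ncard_of_injOn q
            (fun c hc => hqmem c (Finset.mem_coe.1 hc)) ?_ ?_
          · intro a ha b hb hab
            rw [Finset.mem_coe] at ha hb
            rw [← hqfaces a ha, ← hqfaces b hb, hab]
          · refine Set.Finite.of_finite_image (f := fun K : SComplex => K.faces) ?_ ?_
            · refine Set.Finite.subset
                ((F.faces.powerset : Finset (Finset (Finset ℕ))) : Set (Finset (Finset ℕ))).toFinite ?_
              rintro c' ⟨K, ⟨hK1, _⟩, rfl⟩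
              exact Finset.mem_coe.2 (Finset.mem_powerset.2 hK1)
            · intro a _ b _ hab
              exact aux_ext hab
      _ = nCopies F H := rfl
  have hmain : sF.card ≤ ((n - h).descFactorial (g - h) * g.descFactorial h) * Nm := by
    calc sF.card
        ≤ ((n - h).descFactorial (g - h) * g.descFactorial h) * (sF.image f).card :=
          Finset.card_le_mul_card_image (f := f) sF _ stepA
      _ ≤ ((n - h).descFactorial (g - h) * g.descFactorial h) * Nm :=
          Nat.mul_le_mul_left _ (hstepC.trans hNle)
  rw [hSncard]
  have hsplit : (n.descFactorial g : ℝ) / (n.descFactorial h : ℝ) =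
      ((n - h).descFactorial (g - h) : ℝ) := by
    have hNd := Nat.descFactorial_mul_descFactorial (n := n) (k := h) (m := g) hh_le_g
    have hpos : (0:ℝ) < (n.descFactorial h : ℝ) := by
      exact_mod_cast aux_dF_pos hh_le_n
    rw [← hNd]
    push_cast
    rw [mul_div_assoc, div_self hpos.ne', mul_one]
  rw [hsplit]
  have h1 : (g.descFactorial h : ℝ) ≤ (g.factorial : ℝ) := by
    exact_mod_cast aux_dF_le_fact hh_le_g
  have h2 : (sF.card : ℝ) ≤
      (((n - h).descFactorial (g - h) * g.descFactorial h) * Nm : ℕ) := by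
    exact_mod_cast hmain
  have h3 : (0:ℝ) ≤ ((n - h).descFactorial (g - h) : ℝ) := by positivity
  have h4 : (0:ℝ) ≤ (Nm : ℝ) := by positivity
  push_cast at h2
  nlinarith [mul_le_mul_of_nonneg_left h1 (mul_nonneg h4 h3)]
end
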